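/- arXiv:2209.03553 — 11 statements merged into one kernel-verified Lean document; each statement's English description precedes it below -/
import Mathlib

section
/- Let (V, 𝒮) be a simplicial fan supported on ℝⁿ_{≥0}, let E ∈ 𝒮, and let F ∈ lk(E) be a maximal non-U-pyramid, i.e., F ∪ E is interior, F is not a U-pyramid, and every F′ ∈ lk(E) with F ⊊ F′ is a U-pyramid. Then n − |F ∪ E| = |𝒜_F|, i.e., the codimension of F ∪ E equals the number of apices of F. -/
open scoped Classical

noncomputable section

/-- The conical hull (set of nonnegative linear combinations) of a finite set of
vectors in `ℝⁿ`. -/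
def coneOf {n : ℕ} (F : Finset (Fin n → ℝ)) : Set (Fin n → ℝ) :=
  {x | ∃ lam : (Fin n → ℝ) → ℝ, (∀ v ∈ F, 0 ≤ lam v) ∧ x = ∑ v ∈ F, lam v • v}

/-- A simplicial fan supported on `ℝⁿ_{≥0}`, encoding a geometric triangulation of
the `(n-1)`-dimensional simplex: a finite vertex set `V ⊆ ℝⁿ_{≥0} ∖ {0}` together
with a downward-closed collection of linearly independent finite subsets of `V`
(the faces, including `∅`) whose cones cover the nonnegative orthant and intersect
along common faces. -/
structure SimplicialFan (n : ℕ) where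
  verts : Finset (Fin n → ℝ)
  faces : Finset (Finset (Fin n → ℝ))
  verts_nonneg : ∀ v ∈ verts, ∀ i, 0 ≤ v i
  verts_ne_zero : ∀ v ∈ verts, v ≠ 0
  faces_subset_verts : ∀ F ∈ faces, F ⊆ verts
  empty_mem : ∅ ∈ faces
  indep : ∀ F ∈ faces, LinearIndependent ℝ (fun v : {x // x ∈ F} => (v : Fin n → ℝ))
  down_closed : ∀ F ∈ faces, ∀ F' ⊆ F, F' ∈ faces
  covers : (⋃ F ∈ faces, coneOf F) = {x : Fin n → ℝ | ∀ i, 0 ≤ x i}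
  inter_cone : ∀ F ∈ faces, ∀ F' ∈ faces, coneOf F ∩ coneOf F' = coneOf (F ∩ F')

/-- `σ(F)`: the set of coordinates `ℓ` such that some `v ∈ F` has `v_ℓ ≠ 0`. -/
def suppSet {n : ℕ} (F : Finset (Fin n → ℝ)) : Finset (Fin n) :=
  Finset.univ.filter fun ℓ => ∃ v ∈ F, v ℓ ≠ 0

/-- A face is interior if its support is all of `{1,…,n}`. -/
def IsInteriorFace {n : ℕ} (F : Finset (Fin n → ℝ)) : Prop :=
  suppSet F = Finset.univ

/-- The excess `e(F) = |σ(F)| − |F|`. -/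
def excess {n : ℕ} (F : Finset (Fin n → ℝ)) : ℕ :=
  (suppSet F).card - F.card

/-- The link of a face `E`: faces `F` with `F ∩ E = ∅` and `F ∪ E ∈ 𝒮`. -/
def link {n : ℕ} (S : SimplicialFan n) (E : Finset (Fin n → ℝ)) :
    Finset (Finset (Fin n → ℝ)) :=
  S.faces.filter fun F => F ∩ E = ∅ ∧ F ∪ E ∈ S.faces

/-- `F ∈ lk(E)` is a pyramid with apex `A ∈ F` if `F ∪ E` is interior but
`(F ∪ E) ∖ {A}` is not. -/
def IsPyramidApex {n : ℕ} (E F : Finset (Fin n → ℝ)) (A : Fin n → ℝ) : Prop :=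
  A ∈ F ∧ IsInteriorFace (F ∪ E) ∧ ¬ IsInteriorFace ((F ∪ E).erase A)

/-- `𝒜_F`: the set of apices of `F` (relative to `E`). -/
def apices {n : ℕ} (E F : Finset (Fin n → ℝ)) : Finset (Fin n → ℝ) :=
  F.filter fun A => IsPyramidApex E F A

/-- `V_A = {1,…,n} ∖ σ((F ∪ E) ∖ {A})`. -/
def baseDirs {n : ℕ} (E F : Finset (Fin n → ℝ)) (A : Fin n → ℝ) : Finset (Fin n) :=
  Finset.univ \ suppSet ((F ∪ E).erase A)

/-- `F` is a U-pyramid if `|V_A| = 1` for some apex `A` of `F`. -/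
def IsUPyramid {n : ℕ} (E F : Finset (Fin n → ℝ)) : Prop :=
  ∃ A ∈ apices E F, (baseDirs E F A).card = 1

/-- A full partition of `F ∈ lk(E)`: a decomposition `F = F₁ ⊔ F₂ ⊔ 𝒜_F` with
`F₁ ∪ 𝒜_F ∪ E` interior and `σ(F₂ ∪ E) = {1,…,n} ∖ ⋃_{A ∈ 𝒜_F} V_A`. -/
def IsFullPartition {n : ℕ} (E F F₁ F₂ : Finset (Fin n → ℝ)) : Prop :=
  F = F₁ ∪ F₂ ∪ apices E F ∧
  Disjoint F₁ F₂ ∧ Disjoint F₁ (apices E F) ∧ Disjoint F₂ (apices E F) ∧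
  IsInteriorFace (F₁ ∪ apices E F ∪ E) ∧
  suppSet (F₂ ∪ E) = Finset.univ \ (apices E F).biUnion (baseDirs E F)

/-- The local `h`-polynomial
`ℓ(𝒮, E; t) = Σ_{F ∈ 𝒮, E ⊆ F} (−1)^{n−|F|} t^{(n−|E|)−e(F)} (t−1)^{e(F)}`. -/
def localH {n : ℕ} (S : SimplicialFan n) (E : Finset (Fin n → ℝ)) : Polynomial ℤ :=
  ∑ F ∈ S.faces.filter (fun F => E ⊆ F),
    Polynomial.C ((-1 : ℤ) ^ (n - F.card)) *
      Polynomial.X ^ ((n - E.card) - excess F) * (Polynomial.X - 1) ^ (excess F)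

/-
Write `G = F ∪ E`. Perturbing the relative interior point `∑ v ∈ G, v` of `cone G` in the
direction `e_ℓ` shows that `e_ℓ` is a combination of a face `H ⊇ G` with positive coefficients on
`H ∖ G`. If `H ≠ G`, maximality makes `H ∖ E` a U-pyramid; its apex `B` is an apex of `F` whose
base directions in `H` reduce to a single coordinate `p`, and reading off the coordinates of `e_ℓ`
on `V_B` forces `V_B = {p, ℓ}`. Hence each `V_A` has exactly two elements, the `V_A` are disjoint,
and `G ∖ 𝒜_F` spans the same space as the unit vectors outside `⋃ V_A`. So
`|G| - |𝒜_F| = n - 2 |𝒜_F|`.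
-/

open Finset

lemma mem_suppSet {n : ℕ} {F : Finset (Fin n → ℝ)} {j : Fin n} :
    j ∈ suppSet F ↔ ∃ v ∈ F, v j ≠ 0 := by
  simp [suppSet]

lemma suppSet_mono {n : ℕ} {F G : Finset (Fin n → ℝ)} (h : F ⊆ G) : suppSet F ⊆ suppSet G :=
  fun _ hj => let ⟨v, hv, hvj⟩ := mem_suppSet.1 hj; mem_suppSet.2 ⟨v, h hv, hvj⟩

lemma IsInteriorFace.mono {n : ℕ} {F G : Finset (Fin n → ℝ)} (hF : IsInteriorFace F)
    (h : F ⊆ G) : IsInteriorFace G :=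
  univ_subset_iff.1 (hF ▸ suppSet_mono h)

lemma sum_mem_coneOf {n : ℕ} (G : Finset (Fin n → ℝ)) : ∑ v ∈ G, v ∈ coneOf G :=
  ⟨fun _ => 1, fun _ _ => zero_le_one, by simp⟩

lemma coneOf_eq_image {n : ℕ} (H : Finset (Fin n → ℝ)) :
    coneOf H = Fintype.linearCombination ℝ (fun v : H => (v : Fin n → ℝ)) ''
      {c | ∀ v, 0 ≤ c v} := by
  ext x
  simp only [coneOf, Set.mem_ofPred_eq, Set.mem_image, Fintype.linearCombination_apply]
  constructor
  · rintro ⟨lam, hlam, rfl⟩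
    exact ⟨fun v => lam v, fun v => hlam v v.2, sum_attach H fun v => lam v • v⟩
  · rintro ⟨c, hc, rfl⟩
    refine ⟨fun v => if h : v ∈ H then c ⟨v, h⟩ else 0, fun v hv => by simp [hv, hc], ?_⟩
    rw [← sum_attach H]
    simp

lemma isClosed_coneOf {n : ℕ} {H : Finset (Fin n → ℝ)}
    (hH : LinearIndependent ℝ (fun v : H => (v : Fin n → ℝ))) : IsClosed (coneOf H) := by
  rw [coneOf_eq_image]
  refine (LinearMap.isClosedEmbedding_of_injective ?_).isClosedMap _ ?_
  · exact LinearMap.ker_eq_bot.2 hH.fintypeLinearCombination_injective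
  · simp only [Set.ofPred_forall]
    exact isClosed_iInter fun v => isClosed_le continuous_const (continuous_apply v)

lemma Finset.card_eq_card_of_span_eq {K M : Type*} [DivisionRing K] [AddCommGroup M]
    [Module K M] {s t : Finset M} (hs : LinearIndepOn K id (s : Set M))
    (ht : LinearIndepOn K id (t : Set M))
    (hst : Submodule.span K (s : Set M) = Submodule.span K (t : Set M)) : s.card = t.card := by
  rw [← finrank_span_finset_eq_card hs, ← finrank_span_finset_eq_card ht, hst]

namespace SimplicialFan

variable {n : ℕ} (S : SimplicialFan n)

lemma linearIndepOn {H : Finset (Fin n → ℝ)} (hH : H ∈ S.faces) :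
    LinearIndepOn ℝ id (H : Set (Fin n → ℝ)) :=
  S.indep H hH

lemma subset_of_sum_mem_coneOf {G H : Finset (Fin n → ℝ)} (hG : G ∈ S.faces)
    (hH : H ∈ S.faces) (h : ∑ v ∈ G, v ∈ coneOf H) : G ⊆ H := by
  obtain ⟨γ, -, hγ⟩ : ∑ v ∈ G, v ∈ coneOf (G ∩ H) :=
    S.inter_cone G hG H hH ▸ ⟨sum_mem_coneOf G, h⟩
  have hcoeff := linearIndepOn_finset_iffₛ.1 (S.linearIndepOn hG) (fun _ => 1)
    (fun v => if v ∈ H then γ v else 0) (by simp [ite_smul, hγ])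
  intro v hv
  by_contra hvH
  simpa [hvH] using hcoeff v hv

-- `∑ v ∈ G, v` lies in the relative interior of `cone G`: the cones of faces not containing `G`
-- form a closed set missing it, so moving slightly from it in a direction `d ≥ 0` stays in the
-- cone of a face containing `G`.
open Filter Topology in
lemma exists_face_superset_eq_sum {G : Finset (Fin n → ℝ)} (hG : G ∈ S.faces)
    {d : Fin n → ℝ} (hd : ∀ i, 0 ≤ d i) :
    ∃ H ∈ S.faces, G ⊆ H ∧ ∃ μ : (Fin n → ℝ) → ℝ,
      (∀ u ∈ H \ G, 0 ≤ μ u) ∧ d = ∑ v ∈ H, μ v • v := by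
  set b := ∑ v ∈ G, v
  set K := ⋃ H ∈ S.faces.filter (¬ G ⊆ ·), coneOf H
  have hK : IsClosed K :=
    isClosed_biUnion_finset fun H hH => isClosed_coneOf (S.indep H (mem_filter.1 hH).1)
  have hbK : b ∉ K := by
    simp only [K, Set.mem_iUnion, mem_filter, not_exists]
    exact fun H ⟨hH, hGH⟩ hb => hGH (S.subset_of_sum_mem_coneOf hG hH hb)
  have hlim : Tendsto (fun t : ℝ => b + t • d) (𝓝[>] 0) (𝓝 b) := by
    have : Continuous fun t : ℝ => b + t • d := by fun_prop
    simpa using (this.tendsto 0).mono_left nhdsWithin_le_nhds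
  obtain ⟨t, htK, ht⟩ :=
    ((hlim.eventually (hK.isOpen_compl.mem_nhds hbK)).and self_mem_nhdsWithin).exists
  have hb : ∀ i, 0 ≤ b i := fun i => by
    simpa [b, Finset.sum_apply] using
      sum_nonneg fun v hv => S.verts_nonneg v (S.faces_subset_verts G hG hv) i
  have hx : b + t • d ∈ {x : Fin n → ℝ | ∀ i, 0 ≤ x i} :=
    fun i => add_nonneg (hb i) (mul_nonneg (le_of_lt ht) (hd i))
  rw [← S.covers] at hx
  obtain ⟨H, hH, hx⟩ := Set.mem_iUnion₂.1 hx
  have hGH : G ⊆ H := by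
    by_contra h
    exact htK (Set.mem_biUnion (mem_filter.2 ⟨hH, h⟩) hx)
  obtain ⟨lam, hlam, hx⟩ := hx
  have hbH : b = ∑ v ∈ H, (if v ∈ G then 1 else 0 : ℝ) • v := by
    simp [b, ite_smul, inter_eq_right.2 hGH]
  refine ⟨H, hH, hGH, fun v => t⁻¹ * (lam v - if v ∈ G then 1 else 0), fun u hu => ?_, ?_⟩
  · beta_reduce
    rw [if_neg (mem_sdiff.1 hu).2, sub_zero]
    exact mul_nonneg (inv_nonneg.2 (le_of_lt ht)) (hlam u (mem_sdiff.1 hu).1)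
  · simp_rw [mul_smul, ← smul_sum, sub_smul, sum_sub_distrib, ← hx, ← hbH, add_sub_cancel_left,
      smul_smul, inv_mul_cancel₀ (ne_of_gt ht), one_smul]

lemma exists_face_superset_eq_sum_pos {G : Finset (Fin n → ℝ)} (hG : G ∈ S.faces)
    {d : Fin n → ℝ} (hd : ∀ i, 0 ≤ d i) :
    ∃ H ∈ S.faces, G ⊆ H ∧ ∃ μ : (Fin n → ℝ) → ℝ,
      (∀ u ∈ H \ G, 0 < μ u) ∧ d = ∑ v ∈ H, μ v • v := by
  obtain ⟨H, hH, hGH, μ, hμ, rfl⟩ := S.exists_face_superset_eq_sum hG hd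
  refine ⟨H.filter (fun v => v ∈ G ∨ μ v ≠ 0), S.down_closed H hH _ (filter_subset _ _),
    fun v hv => mem_filter.2 ⟨hGH hv, Or.inl hv⟩, μ, fun u hu => ?_, ?_⟩
  · obtain ⟨⟨huH, hu'⟩, huG⟩ := mem_sdiff.1 hu |>.imp_left mem_filter.1
    exact (hμ u (mem_sdiff.2 ⟨huH, huG⟩)).lt_of_ne' (hu'.resolve_left huG)
  · exact (sum_filter_of_ne fun v _ h => Or.inr (left_ne_zero_of_smul h)).symm

end SimplicialFan

section Apices

variable {n : ℕ} {E F : Finset (Fin n → ℝ)} {A B : Fin n → ℝ} {j ℓ : Fin n}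

lemma apices_subset_union : apices E F ⊆ F ∪ E :=
  (filter_subset _ _).trans subset_union_left

lemma mem_baseDirs : j ∈ baseDirs E F A ↔ ∀ v ∈ F ∪ E, v ≠ A → v j = 0 := by
  rw [baseDirs]
  simp only [Finset.mem_sdiff, mem_univ, true_and, mem_suppSet, mem_erase, not_exists, not_and,
    not_not]
  exact ⟨fun h v hv hvA => h v ⟨hvA, hv⟩, fun h v hv => h v hv.2 hv.1⟩

lemma apply_ne_zero_of_mem_baseDirs (hint : IsInteriorFace (F ∪ E))
    (hj : j ∈ baseDirs E F A) : A j ≠ 0 := by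
  obtain ⟨v, hv, hvj⟩ := mem_suppSet.1 (hint ▸ mem_univ j : j ∈ suppSet (F ∪ E))
  by_cases hvA : v = A
  · exact hvA ▸ hvj
  · exact absurd (mem_baseDirs.1 hj v hv hvA) hvj

lemma eq_of_mem_baseDirs (hint : IsInteriorFace (F ∪ E)) (hA : A ∈ F ∪ E)
    (hjA : j ∈ baseDirs E F A) (hjB : j ∈ baseDirs E F B) : A = B := by
  by_contra hAB
  exact apply_ne_zero_of_mem_baseDirs hint hjA (mem_baseDirs.1 hjB A hA hAB)

lemma pairwiseDisjoint_baseDirs (hint : IsInteriorFace (F ∪ E)) :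
    (apices E F : Set (Fin n → ℝ)).PairwiseDisjoint (baseDirs E F) :=
  fun _ hA _ _ hAB => disjoint_left.2 fun _ hjA hjB =>
    hAB (eq_of_mem_baseDirs hint (apices_subset_union hA) hjA hjB)

lemma baseDirs_nonempty (hA : A ∈ apices E F) : (baseDirs E F A).Nonempty := by
  rw [nonempty_iff_ne_empty, baseDirs, Ne, sdiff_eq_empty_iff_subset, univ_subset_iff]
  exact (mem_filter.1 hA).2.2.2

lemma two_le_card_baseDirs (hnotU : ¬ IsUPyramid E F) (hA : A ∈ apices E F) :
    2 ≤ (baseDirs E F A).card := by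
  have hpos := (baseDirs_nonempty hA).card_pos
  have hne_one : (baseDirs E F A).card ≠ 1 := fun h => hnotU ⟨A, hA, h⟩
  omega

lemma sum_smul_apply_of_mem_baseDirs (hA : A ∈ F ∪ E) (hj : j ∈ baseDirs E F A)
    (c : (Fin n → ℝ) → ℝ) : (∑ v ∈ F ∪ E, c v • v) j = c A * A j := by
  rw [Finset.sum_apply, sum_eq_single_of_mem A hA fun v hv hvA => by
    simp [mem_baseDirs.1 hj v hv hvA]]
  rfl

lemma coeff_eq_zero_of_single_eq_sum (hint : IsInteriorFace (F ∪ E)) (hA : A ∈ F ∪ E)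
    (hj : j ∈ baseDirs E F A) (hjℓ : j ≠ ℓ) {c : (Fin n → ℝ) → ℝ}
    (hc : Pi.single ℓ 1 = ∑ v ∈ F ∪ E, c v • v) : c A = 0 := by
  have hcj := congrFun hc j
  rw [Pi.single_apply, if_neg hjℓ, sum_smul_apply_of_mem_baseDirs hA hj] at hcj
  exact (mul_eq_zero.1 hcj.symm).resolve_right (apply_ne_zero_of_mem_baseDirs hint hj)

end Apices

namespace SimplicialFan

variable {n : ℕ} (S : SimplicialFan n) {E F : Finset (Fin n → ℝ)}

lemma apply_pos_of_mem_baseDirs (hG : F ∪ E ∈ S.faces) (hint : IsInteriorFace (F ∪ E))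
    {A : Fin n → ℝ} (hA : A ∈ F ∪ E) {j : Fin n} (hj : j ∈ baseDirs E F A) : 0 < A j :=
  (S.verts_nonneg A (S.faces_subset_verts _ hG hA) j).lt_of_ne'
    (apply_ne_zero_of_mem_baseDirs hint hj)

lemma exists_apex_card_compl_suppSet_erase_eq_one (hF : F ∈ link S E)
    (hint : IsInteriorFace (F ∪ E)) (hmax : ∀ F' ∈ link S E, F ⊂ F' → IsUPyramid E F')
    {H : Finset (Fin n → ℝ)} (hH : H ∈ S.faces) (hGH : F ∪ E ⊂ H) :
    ∃ B ∈ apices E F, (univ \ suppSet (H.erase B)).card = 1 := by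
  have hFE : F ∩ E = ∅ := (mem_filter.1 hF).2.1
  have hH_eq : H \ E ∪ E = H := sdiff_union_of_subset (subset_union_right.trans hGH.subset)
  have hlink : H \ E ∈ link S E :=
    mem_filter.2 ⟨S.down_closed H hH _ sdiff_subset, sdiff_inter_self _ _, by rwa [hH_eq]⟩
  have hFH : F ⊂ H \ E := by
    refine ⟨fun v hv => mem_sdiff.2 ⟨hGH.subset (mem_union_left _ hv), fun hvE => ?_⟩, fun h => ?_⟩
    · simpa [hFE] using mem_inter.2 ⟨hv, hvE⟩
    · exact hGH.not_subset (hH_eq ▸ union_subset_union h subset_rfl)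
  obtain ⟨B, hB, hcard⟩ := hmax _ hlink hFH
  rw [baseDirs, hH_eq] at hcard
  have hnint : ¬ IsInteriorFace (H.erase B) := fun h => by
    simp [show suppSet (H.erase B) = univ from h] at hcard
  have hBG : B ∈ F ∪ E := by
    by_contra hBG
    exact hnint (hint.mono fun v hv =>
      mem_erase.2 ⟨ne_of_mem_of_not_mem hv hBG, hGH.subset hv⟩)
  have hBF : B ∈ F := (mem_union.1 hBG).resolve_right (mem_sdiff.1 (mem_filter.1 hB).1).2
  refine ⟨B, mem_filter.2 ⟨hBF, hBF, hint, fun h => hnint ?_⟩, hcard⟩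
  exact h.mono (erase_subset_erase B hGH.subset)

lemma baseDirs_subset_pair (hG : F ∪ E ∈ S.faces) (hint : IsInteriorFace (F ∪ E))
    {H : Finset (Fin n → ℝ)} (hH : H ∈ S.faces) (hGH : F ∪ E ⊆ H) {μ : (Fin n → ℝ) → ℝ}
    (hμ : ∀ u ∈ H \ (F ∪ E), 0 < μ u) {ℓ : Fin n} (hrep : Pi.single ℓ 1 = ∑ v ∈ H, μ v • v)
    {B : Fin n → ℝ} (hBG : B ∈ F ∪ E) {p : Fin n} (hp : univ \ suppSet (H.erase B) = {p}) :
    baseDirs E F B ⊆ {p, ℓ} := by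
  set rest := fun j => ∑ v ∈ H \ (F ∪ E), μ v * v j
  have heval : ∀ j ∈ baseDirs E F B, (Pi.single ℓ 1 : Fin n → ℝ) j = μ B * B j + rest j := by
    intro j hj
    rw [hrep, ← sum_sdiff hGH, Pi.add_apply, sum_smul_apply_of_mem_baseDirs hBG hj, add_comm,
      Finset.sum_apply]
    rfl
  have hcompl : ∀ {j}, j ∉ suppSet (H.erase B) ↔ j = p := by
    intro j
    rw [← mem_singleton, ← hp, Finset.mem_sdiff, and_iff_right (mem_univ j)]
  have hp_mem : p ∈ baseDirs E F B := mem_baseDirs.2 fun v hv hvB => by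
    by_contra hvp
    exact hcompl.2 rfl (mem_suppSet.2 ⟨v, mem_erase.2 ⟨hvB, hGH hv⟩, hvp⟩)
  have hrest_p : rest p = 0 := sum_eq_zero fun v hv => by
    have hvB : v ≠ B := (ne_of_mem_of_not_mem hBG (mem_sdiff.1 hv).2).symm
    by_contra hvp
    exact hcompl.2 rfl (mem_suppSet.2 ⟨v, mem_erase.2 ⟨hvB, (mem_sdiff.1 hv).1⟩,
      right_ne_zero_of_mul hvp⟩)
  have hrest_pos : ∀ j ∈ baseDirs E F B, j ≠ p → 0 < rest j := by
    intro j hj hjp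
    obtain ⟨v, hv, hvj⟩ := mem_suppSet.1 (not_not.1 (mt hcompl.1 hjp))
    obtain ⟨hvB, hvH⟩ := mem_erase.1 hv
    have hvG : v ∉ F ∪ E := fun hvG => hvj (mem_baseDirs.1 hj v hvG hvB)
    refine sum_pos' (fun u hu => mul_nonneg (hμ u hu).le ?_) ⟨v, mem_sdiff.2 ⟨hvH, hvG⟩,
      mul_pos (hμ v (mem_sdiff.2 ⟨hvH, hvG⟩)) ?_⟩
    · exact S.verts_nonneg u (S.faces_subset_verts H hH (mem_sdiff.1 hu).1) j
    · exact (S.verts_nonneg v (S.faces_subset_verts H hH hvH) j).lt_of_ne' hvj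
  have hμB : 0 ≤ μ B := by
    have h := heval p hp_mem
    rw [hrest_p, add_zero, Pi.single_apply] at h
    have := S.apply_pos_of_mem_baseDirs hG hint hBG hp_mem
    split_ifs at h <;> nlinarith
  intro j hj
  by_contra hjpl
  simp only [mem_insert, mem_singleton, not_or] at hjpl
  have h := heval j hj
  rw [Pi.single_apply, if_neg hjpl.2] at h
  nlinarith [hrest_pos j hj hjpl.1, S.apply_pos_of_mem_baseDirs hG hint hBG hj]

lemma single_eq_sum_or_exists_apex (hF : F ∈ link S E) (hint : IsInteriorFace (F ∪ E))
    (hnotU : ¬ IsUPyramid E F) (hmax : ∀ F' ∈ link S E, F ⊂ F' → IsUPyramid E F')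
    (ℓ : Fin n) :
    (∃ c : (Fin n → ℝ) → ℝ, Pi.single ℓ 1 = ∑ v ∈ F ∪ E, c v • v) ∨
      ∃ B ∈ apices E F, ℓ ∈ baseDirs E F B ∧ (baseDirs E F B).card = 2 := by
  have hG : F ∪ E ∈ S.faces := (mem_filter.1 hF).2.2
  obtain ⟨H, hH, hGH, μ, hμ, hrep⟩ := S.exists_face_superset_eq_sum_pos hG
    (d := Pi.single ℓ 1) fun i => by by_cases h : i = ℓ <;> simp [h]
  rcases hGH.eq_or_ssubset with rfl | hGH'
  · exact Or.inl ⟨μ, hrep⟩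
  obtain ⟨B, hB, hcard⟩ := S.exists_apex_card_compl_suppSet_erase_eq_one hF hint hmax hH hGH'
  obtain ⟨p, hp⟩ := card_eq_one.1 hcard
  have hsub := S.baseDirs_subset_pair hG hint hH hGH hμ hrep (apices_subset_union hB) hp
  have h2 := two_le_card_baseDirs hnotU hB
  have hpl : baseDirs E F B = {p, ℓ} := eq_of_subset_of_card_le hsub (card_le_two.trans h2)
  exact Or.inr ⟨B, hB, hpl ▸ mem_insert_of_mem (mem_singleton_self ℓ),
    le_antisymm (hpl ▸ card_le_two) h2⟩

lemma card_baseDirs_eq_two (hF : F ∈ link S E) (hint : IsInteriorFace (F ∪ E))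
    (hnotU : ¬ IsUPyramid E F) (hmax : ∀ F' ∈ link S E, F ⊂ F' → IsUPyramid E F')
    {A : Fin n → ℝ} (hA : A ∈ apices E F) : (baseDirs E F A).card = 2 := by
  have hAG : A ∈ F ∪ E := apices_subset_union hA
  obtain ⟨ℓ, hℓ⟩ := baseDirs_nonempty hA
  rcases S.single_eq_sum_or_exists_apex hF hint hnotU hmax ℓ with ⟨c, hc⟩ | ⟨B, -, hℓB, hB⟩
  · obtain ⟨j, hj, hjℓ⟩ := exists_mem_ne (two_le_card_baseDirs hnotU hA) ℓ
    have hcA := coeff_eq_zero_of_single_eq_sum hint hAG hj hjℓ hc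
    have hcℓ := congrFun hc ℓ
    rw [Pi.single_eq_same, sum_smul_apply_of_mem_baseDirs hAG hℓ, hcA, zero_mul] at hcℓ
    exact absurd hcℓ one_ne_zero
  · rwa [eq_of_mem_baseDirs hint hAG hℓ hℓB]

lemma span_sdiff_apices_eq_span_single (hF : F ∈ link S E) (hint : IsInteriorFace (F ∪ E))
    (hnotU : ¬ IsUPyramid E F) (hmax : ∀ F' ∈ link S E, F ⊂ F' → IsUPyramid E F') :
    Submodule.span ℝ (((F ∪ E) \ apices E F : Finset (Fin n → ℝ)) : Set (Fin n → ℝ)) =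
      Submodule.span ℝ (((univ \ (apices E F).biUnion (baseDirs E F)).image
        fun j => (Pi.single j 1 : Fin n → ℝ) : Finset (Fin n → ℝ)) : Set (Fin n → ℝ)) := by
  apply le_antisymm <;> rw [Submodule.span_le]
  · intro v hv
    obtain ⟨hvG, hvA⟩ := mem_sdiff.1 hv
    rw [← Finset.univ_sum_single v]
    refine Submodule.sum_mem _ fun j _ => ?_
    by_cases hj : j ∈ (apices E F).biUnion (baseDirs E F)
    · obtain ⟨A, hA, hjA⟩ := mem_biUnion.1 hj
      rw [mem_baseDirs.1 hjA v hvG (ne_of_mem_of_not_mem hA hvA).symm, Pi.single_zero]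
      exact zero_mem _
    · rw [← mul_one (v j), ← smul_eq_mul, Pi.single_smul']
      exact Submodule.smul_mem _ _ (Submodule.subset_span (mem_image_of_mem _
        (mem_sdiff.2 ⟨mem_univ j, hj⟩)))
  · intro x hx
    obtain ⟨j, hj, rfl⟩ := mem_image.1 hx
    obtain ⟨c, hc⟩ := (S.single_eq_sum_or_exists_apex hF hint hnotU hmax j).resolve_right
      fun ⟨B, hB, hjB, _⟩ => (mem_sdiff.1 hj).2 (mem_biUnion.2 ⟨B, hB, hjB⟩)
    have hcA : ∀ A ∈ apices E F, c A = 0 := fun A hA => by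
      obtain ⟨k, hk⟩ := baseDirs_nonempty hA
      refine coeff_eq_zero_of_single_eq_sum hint (apices_subset_union hA) hk (fun hkj => ?_) hc
      exact (mem_sdiff.1 hj).2 (mem_biUnion.2 ⟨A, hA, hkj ▸ hk⟩)
    rw [hc, ← sum_sdiff apices_subset_union,
      sum_eq_zero (s := apices E F) fun A hA => by rw [hcA A hA, zero_smul], add_zero]
    exact Submodule.sum_smul_mem _ _ fun v hv => Submodule.subset_span hv

end SimplicialFan

theorem maximal_nonUPyramid_codim_eq_card_apices_general {n : ℕ} (S : SimplicialFan n)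
    (E : Finset (Fin n → ℝ))
    (F : Finset (Fin n → ℝ)) (hF : F ∈ link S E)
    (hint : IsInteriorFace (F ∪ E))
    (hnotU : ¬ IsUPyramid E F)
    (hmax : ∀ F' ∈ link S E, F ⊂ F' → IsUPyramid E F') :
    n - (F ∪ E).card = (apices E F).card := by
  have hG : F ∪ E ∈ S.faces := (mem_filter.1 hF).2.2
  set R := univ \ (apices E F).biUnion (baseDirs E F)
  have hsingle := Pi.linearIndependent_single_one (Fin n) ℝ
  have hcard_G : ((F ∪ E) \ apices E F).card = R.card := by
    rw [card_eq_card_of_span_eq (S.linearIndepOn (S.down_closed _ hG _ sdiff_subset))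
      (hsingle.linearIndepOn_id.mono (by simp)) (S.span_sdiff_apices_eq_span_single hF hint hnotU hmax),
      card_image_of_injective _ hsingle.injective]
  have hcard_n : R.card + 2 * (apices E F).card = n := by
    have h := card_sdiff_add_card_eq_card (subset_univ ((apices E F).biUnion (baseDirs E F)))
    rwa [card_univ, Fintype.card_fin, card_biUnion (pairwiseDisjoint_baseDirs hint), sum_congr rfl fun A hA =>
      S.card_baseDirs_eq_two hF hint hnotU hmax hA, sum_const, smul_eq_mul, mul_comm] at h
  have := card_sdiff_add_card_eq_card (apices_subset_union (E := E) (F := F))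
  omega

/-- If `F ∈ lk(E)` is a maximal non-U-pyramid (`F ∪ E` interior, `F` not a
U-pyramid, and every strictly larger face of `lk(E)` is a U-pyramid), then the
codimension `n − |F ∪ E|` equals the number of apices `|𝒜_F|`. -/
theorem maximal_nonUPyramid_codim_eq_card_apices {n : ℕ} (S : SimplicialFan n)
    (E : Finset (Fin n → ℝ)) (hE : E ∈ S.faces)
    (F : Finset (Fin n → ℝ)) (hF : F ∈ link S E)
    (hint : IsInteriorFace (F ∪ E))
    (hnotU : ¬ IsUPyramid E F)
    (hmax : ∀ F' ∈ link S E, F ⊂ F' → IsUPyramid E F') :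
    n - (F ∪ E).card = (apices E F).card :=
  maximal_nonUPyramid_codim_eq_card_apices_general S E F hF hint hnotU hmax
end
end

section
/- Let p : ℝ^m → ℝ^q be a linear map, let u₁,…,u_r ∈ ℝ^m be linearly independent, and let C := {Σ_{i=1}^r λ_i u_i : λ_i ≥ 0} be the simplicial cone they generate. Let J := {i : there exists x ∈ C ∩ ker(p) whose u_i-coefficient is positive}, and let Ĉ := {Σ_{i∈J} λ_i u_i : λ_i ≥ 0} (the smallest face of C containing C ∩ ker(p)). Then: (i) p(Ĉ) is a linear subspace of ℝ^q; (ii) every linear subspace W ⊆ p(C) satisfies W ⊆ p(Ĉ); and (iii) if moreover span(C ∩ ker(p)) = span(C) ∩ ker(p), then the images of the vectors p(u_i) for i ∉ J in the quotient ℝ^q / span(p(Ĉ)) are linearly independent; in particular the cone p(C)/p(Ĉ) in this quotient is a simplicial cone of dimension r − |J|. -/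
noncomputable section

/-- Linear-algebra lemma on images of simplicial cones. Let `p : ℝ^m → ℝ^q` be
linear, `u₁,…,u_r` linearly independent generating the simplicial cone `C`, let
`J` be the set of indices whose generator appears with positive coefficient in
some element of `C ∩ ker p`, and let `Ĉ` be the face of `C` generated by
`{u_i : i ∈ J}`.  Then `p(Ĉ)` is a linear subspace, every linear subspace of
`p(C)` is contained in `p(Ĉ)`, and if `span(C ∩ ker p) = span(C) ∩ ker p` then
the images of the `p(u_i)`, `i ∉ J`, are linearly independent in the quotient
`ℝ^q / span(p(Ĉ))` (so `p(C)/p(Ĉ)` is a simplicial cone of dimension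
`r − |J|`). -/
theorem image_simplicial_cone_largest_linear_subspace
    {m q r : ℕ} (p : (Fin m → ℝ) →ₗ[ℝ] (Fin q → ℝ))
    (u : Fin r → (Fin m → ℝ)) (hu : LinearIndependent ℝ u)
    (C : Set (Fin m → ℝ))
    (hC : C = {x | ∃ lam : Fin r → ℝ, (∀ i, 0 ≤ lam i) ∧ x = ∑ i, lam i • u i})
    (J : Set (Fin r))
    (hJ : J = {i | ∃ lam : Fin r → ℝ, (∀ j, 0 ≤ lam j) ∧
      p (∑ j, lam j • u j) = 0 ∧ 0 < lam i})
    (Chat : Set (Fin m → ℝ))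
    (hChat : Chat = {x | ∃ lam : Fin r → ℝ, (∀ i, 0 ≤ lam i) ∧
      (∀ i, i ∉ J → lam i = 0) ∧ x = ∑ i, lam i • u i}) :
    (p '' Chat = (Submodule.span ℝ (p '' Chat) : Set (Fin q → ℝ))) ∧
    (∀ W : Submodule ℝ (Fin q → ℝ), (W : Set (Fin q → ℝ)) ⊆ p '' C →
      (W : Set (Fin q → ℝ)) ⊆ p '' Chat) ∧
    ((Submodule.span ℝ (C ∩ (LinearMap.ker p : Set (Fin m → ℝ))) =
        Submodule.span ℝ C ⊓ LinearMap.ker p) →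
      LinearIndependent ℝ (fun i : {i : Fin r // i ∉ J} =>
        Submodule.Quotient.mk (p := Submodule.span ℝ (p '' Chat)) (p (u i)))) := by
  classical
  -- Coefficients of cone kernel elements vanish outside J
  have h1 : ∀ lam : Fin r → ℝ, (∀ j, 0 ≤ lam j) → p (∑ j, lam j • u j) = 0 →
      ∀ i, i ∉ J → lam i = 0 := by
    intro lam hlam hker i hiJ
    by_contra h
    apply hiJ
    rw [hJ]
    exact ⟨lam, hlam, hker, lt_of_le_of_ne (hlam i) (Ne.symm h)⟩
  -- A kernel element with all coefficients positive on J and zero off J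
  have hν : ∃ ν : Fin r → ℝ, (∀ i, 0 ≤ ν i) ∧ (∀ i, i ∉ J → ν i = 0) ∧
      (∀ i, i ∈ J → 0 < ν i) ∧ p (∑ j, ν j • u j) = 0 := by
    have hch : ∀ i : Fin r, ∃ lam : Fin r → ℝ, (∀ j, 0 ≤ lam j) ∧
        p (∑ j, lam j • u j) = 0 ∧ (i ∈ J → 0 < lam i) := by
      intro i
      by_cases hi : i ∈ J
      · rw [hJ] at hi
        obtain ⟨lam, ha, hb, hcc⟩ := hi
        exact ⟨lam, ha, hb, fun _ => hcc⟩
      · exact ⟨0, fun _ => le_rfl, by simp, fun h => absurd h hi⟩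
    choose f hf0 hfk hfp using hch
    refine ⟨fun j => ∑ i, f i j, ?_, ?_, ?_, ?_⟩
    · intro j; exact Finset.sum_nonneg fun i _ => hf0 i j
    · intro i hiJ
      exact Finset.sum_eq_zero fun k _ => h1 (f k) (hf0 k) (hfk k) i hiJ
    · intro i hiJ
      exact Finset.sum_pos' (fun k _ => hf0 k i) ⟨i, Finset.mem_univ i, hfp i hiJ⟩
    · have hsw : (∑ j, (∑ i, f i j) • u j) = ∑ i, ∑ j, f i j • u j := by
        rw [show (∑ j, (∑ i, f i j) • u j) = ∑ j, ∑ i, f i j • u j from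
          Finset.sum_congr rfl fun j _ => Finset.sum_smul]
        exact Finset.sum_comm
      rw [hsw, map_sum]
      exact Finset.sum_eq_zero fun i _ => hfk i
  obtain ⟨ν, hν0, hνout, hνin, hνker⟩ := hν
  -- membership description of p '' Chat
  have hmem : ∀ x, x ∈ p '' Chat ↔ ∃ lam : Fin r → ℝ, (∀ i, 0 ≤ lam i) ∧
      (∀ i, i ∉ J → lam i = 0) ∧ x = p (∑ i, lam i • u i) := by
    intro x
    constructor
    · rintro ⟨y, hy, rfl⟩
      rw [hChat] at hy
      obtain ⟨lam, ha, hb, rfl⟩ := hy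
      exact ⟨lam, ha, hb, rfl⟩
    · rintro ⟨lam, ha, hb, rfl⟩
      exact ⟨_, by rw [hChat]; exact ⟨lam, ha, hb, rfl⟩, rfl⟩
  have hzero : (0 : Fin q → ℝ) ∈ p '' Chat := by
    rw [hmem]
    exact ⟨0, fun _ => le_rfl, fun _ _ => rfl, by simp⟩
  have hadd : ∀ x y, x ∈ p '' Chat → y ∈ p '' Chat → x + y ∈ p '' Chat := by
    intro x y hx hy
    rw [hmem] at hx hy ⊢
    obtain ⟨a, ha0, haJ, rfl⟩ := hx
    obtain ⟨b, hb0, hbJ, rfl⟩ := hy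
    refine ⟨fun i => a i + b i, fun i => add_nonneg (ha0 i) (hb0 i),
      fun i hi => by simp [haJ i hi, hbJ i hi], ?_⟩
    rw [← map_add, ← Finset.sum_add_distrib]
    congr 1
    exact Finset.sum_congr rfl fun i _ => (add_smul _ _ _).symm
  have hsmul : ∀ (c : ℝ) (x), x ∈ p '' Chat → c • x ∈ p '' Chat := by
    intro c x hx
    rw [hmem] at hx ⊢
    obtain ⟨lam, h1l, h2l, rfl⟩ := hx
    rcases le_or_gt 0 c with hc | hc
    · refine ⟨fun i => c * lam i, fun i => mul_nonneg hc (h1l i),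
        fun i hi => by simp [h2l i hi], ?_⟩
      rw [← map_smul, Finset.smul_sum]
      congr 1
      exact Finset.sum_congr rfl fun i _ => (mul_smul _ _ _).symm
    · obtain ⟨t, ht⟩ := Finite.exists_le (fun i => (-(c * lam i)) / ν i)
      set s := max t 0 with hs
      refine ⟨fun i => s * ν i + c * lam i, ?_, ?_, ?_⟩
      · intro i
        show 0 ≤ s * ν i + c * lam i
        by_cases hi : i ∈ J
        · have hνi := hνin i hi
          have hts : -(c * lam i) / ν i ≤ s := le_trans (ht i) (le_max_left _ _)
          have h2 := (div_le_iff₀ hνi).mp hts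
          nlinarith
        · simp [h2l i hi, hνout i hi]
      · intro i hi
        show s * ν i + c * lam i = 0
        simp [h2l i hi, hνout i hi]
      · have hsum : (∑ i, (s * ν i + c * lam i) • u i)
            = s • (∑ i, ν i • u i) + c • (∑ i, lam i • u i) := by
          rw [Finset.smul_sum, Finset.smul_sum, ← Finset.sum_add_distrib]
          exact Finset.sum_congr rfl fun i _ => by rw [add_smul, mul_smul, mul_smul]
        rw [hsum, map_add, map_smul, map_smul, hνker, smul_zero, zero_add]
  let M : Submodule ℝ (Fin q → ℝ) :=
    { carrier := p '' Chat
      add_mem' := fun hx hy => hadd _ _ hx hy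
      zero_mem' := hzero
      smul_mem' := fun c x hx => hsmul c x hx }
  have hMspan : Submodule.span ℝ (p '' Chat) = M := Submodule.span_eq M
  refine ⟨by rw [hMspan]; rfl, ?_, ?_⟩
  · -- part (ii)
    intro W hW x hx
    have h1x : x ∈ p '' C := hW hx
    have h2x : -x ∈ p '' C := hW (W.neg_mem hx)
    obtain ⟨a, ha, hax⟩ := h1x
    obtain ⟨b, hb, hbx⟩ := h2x
    rw [hC] at ha hb
    obtain ⟨lam, hlam, rfl⟩ := ha
    obtain ⟨mu, hmu, rfl⟩ := hb
    have hker : p (∑ i, (lam i + mu i) • u i) = 0 := by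
      have hsum : (∑ i, (lam i + mu i) • u i)
          = (∑ i, lam i • u i) + ∑ i, mu i • u i := by
        rw [← Finset.sum_add_distrib]
        exact Finset.sum_congr rfl fun i _ => add_smul _ _ _
      rw [hsum, map_add, hax, hbx, add_neg_cancel]
    have hv : ∀ i, i ∉ J → lam i = 0 := by
      intro i hi
      have h4 : lam i + mu i = 0 :=
        h1 (fun i => lam i + mu i) (fun i => add_nonneg (hlam i) (hmu i)) hker i hi
      have h2 := hlam i
      have h3 := hmu i
      linarith
    rw [hmem]
    exact ⟨lam, hlam, hv, hax.symm⟩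
  · -- part (iii)
    intro hspan
    have hui : ∀ i : Fin r, u i = ∑ j, (if j = i then (1:ℝ) else 0) • u j := by
      intro i
      simp [ite_smul, Finset.sum_ite_eq, Finset.sum_ite_eq']
    rw [Fintype.linearIndependent_iff]
    intro g hg i0
    set N := Submodule.span ℝ (p '' Chat) with hN
    set c : Fin r → ℝ := fun i => if h : i ∈ J then 0 else g ⟨i, h⟩ with hcdef
    have hmk : (N.mkQ) (p (∑ i, c i • u i)) = 0 := by
      have h0 : (N.mkQ) (p (∑ i, c i • u i)) = ∑ i, c i • (N.mkQ) (p (u i)) := by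
        rw [map_sum, map_sum]
        exact Finset.sum_congr rfl fun i _ => by rw [map_smul, map_smul]
      rw [h0]
      have h2' : ∑ i : Fin r, c i • (N.mkQ) (p (u i))
          = ∑ i : {i : Fin r // i ∉ J}, c i • (N.mkQ) (p (u i)) := by
        have hfil : ∑ i ∈ Finset.univ.filter (fun i => i ∉ J), c i • (N.mkQ) (p (u i))
            = ∑ i : Fin r, c i • (N.mkQ) (p (u i)) := by
          apply Finset.sum_filter_of_ne
          intro x _ hx hxJ
          apply hx
          simp [hcdef, hxJ]
        rw [← hfil]
        exact Finset.sum_subtype _ (by simp) _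
      rw [h2']
      have h3' : ∀ i : {i : Fin r // i ∉ J}, c i • (N.mkQ) (p (u i))
          = g i • (N.mkQ) (p (u i)) := by
        intro i
        rw [show c ↑i = g i from dif_neg i.2]
      rw [Finset.sum_congr rfl fun i _ => h3' i]
      simpa [Submodule.mkQ_apply] using hg
    have hpc : p (∑ i, c i • u i) ∈ N := by
      have h := hmk
      rw [Submodule.mkQ_apply, Submodule.Quotient.mk_eq_zero] at h
      exact h
    have hpc2 : p (∑ i, c i • u i) ∈ M := by rw [← hMspan]; exact hpc
    obtain ⟨lam, hlam0, hlamJ, heq⟩ := (hmem _).mp hpc2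
    -- x0 := ∑ (c - lam) u lies in span C ⊓ ker p
    have hx0ker : p (∑ i, (c i - lam i) • u i) = 0 := by
      have hsum : (∑ i, (c i - lam i) • u i)
          = (∑ i, c i • u i) - ∑ i, lam i • u i := by
        rw [← Finset.sum_sub_distrib]
        exact Finset.sum_congr rfl fun i _ => sub_smul _ _ _
      rw [hsum, map_sub, ← heq, sub_self]
    have huC : ∀ i : Fin r, u i ∈ C := by
      intro i
      rw [hC]
      exact ⟨fun j => if j = i then 1 else 0,
        fun j => by by_cases h : j = i <;> simp [h], hui i⟩
    have hx0span : (∑ i, (c i - lam i) • u i) ∈ Submodule.span ℝ C :=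
      Submodule.sum_mem _ fun i _ =>
        Submodule.smul_mem _ _ (Submodule.subset_span (huC i))
    have hx0 : (∑ i, (c i - lam i) • u i) ∈
        Submodule.span ℝ (C ∩ (LinearMap.ker p : Set (Fin m → ℝ))) := by
      rw [hspan]
      exact ⟨hx0span, hx0ker⟩
    -- the submodule of combinations supported on J
    let K : Submodule ℝ (Fin m → ℝ) :=
      { carrier := {x | ∃ d : Fin r → ℝ, (∀ i, i ∉ J → d i = 0) ∧ x = ∑ i, d i • u i}
        add_mem' := by
          rintro x y ⟨d, hd, rfl⟩ ⟨e, he, rfl⟩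
          refine ⟨fun i => d i + e i, fun i hi => by simp [hd i hi, he i hi], ?_⟩
          rw [← Finset.sum_add_distrib]
          exact Finset.sum_congr rfl fun i _ => (add_smul _ _ _).symm
        zero_mem' := ⟨0, fun _ _ => rfl, by simp⟩
        smul_mem' := by
          rintro a x ⟨d, hd, rfl⟩
          refine ⟨fun i => a * d i, fun i hi => by simp [hd i hi], ?_⟩
          rw [Finset.smul_sum]
          exact Finset.sum_congr rfl fun i _ => (mul_smul _ _ _).symm }
    have hCK : C ∩ (LinearMap.ker p : Set (Fin m → ℝ)) ⊆ (K : Set (Fin m → ℝ)) := by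
      rintro x ⟨hxC, hxk⟩
      rw [hC] at hxC
      obtain ⟨lam', hlam', rfl⟩ := hxC
      exact ⟨lam', h1 lam' hlam' hxk, rfl⟩
    have hx0K : (∑ i, (c i - lam i) • u i) ∈ K :=
      Submodule.span_le.mpr hCK hx0
    obtain ⟨d, hdJ, hdeq⟩ := hx0K
    have hzero2 : (∑ i, (c i - lam i - d i) • u i) = 0 := by
      have hsum : (∑ i, (c i - lam i - d i) • u i)
          = (∑ i, (c i - lam i) • u i) - ∑ i, d i • u i := by
        rw [← Finset.sum_sub_distrib]
        exact Finset.sum_congr rfl fun i _ => sub_smul _ _ _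
      rw [hsum, ← hdeq, sub_self]
    have hall := Fintype.linearIndependent_iff.mp hu
      (fun i => c i - lam i - d i) hzero2 i0.1
    have hc0 : c i0.1 = g i0 := dif_neg i0.2
    have hl0 : lam i0.1 = 0 := hlamJ i0.1 i0.2
    have hd0 : d i0.1 = 0 := hdJ i0.1 i0.2
    rw [hc0, hl0, hd0] at hall
    linarith

end
end

section
/- Let i₁ < i₂ < … < i_s be positive integers and let C ⊆ ℝ^s be a polyhedral cone (the conical hull of a finite set of vectors). Then C is positive if and only if there exists ε₀ > 0 such that for every ε with 0 < ε < ε₀ the vector (ε^{−i₁}, ε^{−i₂}, …, ε^{−i_s}) lies in C. -/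
/-!
If `C` is positive, it contains rows `w₀, …, w_{s-1}` of an upper unitriangular matrix `W`. The
coefficients `λ(ε) = x(ε) W⁻¹` of `x(ε) = (ε^{-i_j})_j` in these rows satisfy
`ε^{i_m} λ_m(ε) → (W⁻¹)_{mm} = 1` as `ε → 0⁺`, because `W⁻¹` is again unitriangular and
`i_j < i_m` for `j < m`; hence `λ(ε) ≥ 0` for small `ε`.

Conversely, `ε^{i_k} • pr_k x(ε) ∈ pr_k C` tends to `(0,…,0,1)`, and `pr_k C` is closed: it is
a finitely generated cone, which by Carathéodory's theorem is a finite union of cones over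
linearly independent families, i.e. of images of orthants under linear embeddings.
-/

noncomputable section

/-- Projection of `ℝ^s` onto the first `k` coordinates. -/
def prProj {s : ℕ} (k : ℕ) (hk : k ≤ s) (x : Fin s → ℝ) : Fin k → ℝ :=
  fun j => x (Fin.castLE hk j)

/-- The vector `(0,…,0,1) ∈ ℝ^k`. -/
def lastUnit (k : ℕ) : Fin k → ℝ :=
  fun j => if (j : ℕ) + 1 = k then 1 else 0

/-- A convex cone `C ⊆ ℝ^s` is positive if `(0,…,0,1) ∈ pr_k(C)` for every
`1 ≤ k ≤ s`. -/
def IsPositiveCone {s : ℕ} (C : Set (Fin s → ℝ)) : Prop :=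
  ∀ k, 1 ≤ k → ∀ hk : k ≤ s, lastUnit k ∈ prProj k hk '' C

open Filter Topology Matrix

section ConicHull

variable {ι V : Type*} [AddCommGroup V] [Module ℝ V]

def conicHull (f : ι → V) (u : Finset ι) : PointedCone ℝ V where
  carrier := {x | ∃ lam : ι → ℝ, (∀ i ∈ u, 0 ≤ lam i) ∧ x = ∑ i ∈ u, lam i • f i}
  zero_mem' := ⟨0, fun _ _ => le_rfl, by simp⟩
  add_mem' := by
    rintro _ _ ⟨a, ha, rfl⟩ ⟨b, hb, rfl⟩
    exact ⟨a + b, fun i hi => add_nonneg (ha i hi) (hb i hi),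
      by simp only [Pi.add_apply, add_smul, Finset.sum_add_distrib]⟩
  smul_mem' := by
    rintro c _ ⟨a, ha, rfl⟩
    exact ⟨fun i => c * a i, fun i hi => mul_nonneg c.2 (ha i hi),
      by simp only [Finset.smul_sum, ← Nonneg.coe_smul, smul_smul]⟩

variable {f : ι → V} {t u : Finset ι} {x : V}

theorem conicHull_mono (htu : t ⊆ u) : conicHull f t ≤ conicHull f u := by
  classical
  rintro _ ⟨lam, hlam, rfl⟩
  refine ⟨fun i => if i ∈ t then lam i else 0, fun i _ => ?_, ?_⟩
  · dsimp only
    split_ifs with hi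
    exacts [hlam i hi, le_rfl]
  · rw [← Finset.sum_subset htu fun i _ hi => by simp [hi]]
    exact Finset.sum_congr rfl fun i hi => by simp [hi]

theorem image_conicHull {W : Type*} [AddCommGroup W] [Module ℝ W] (L : V →ₗ[ℝ] W)
    (f : ι → V) (u : Finset ι) : L '' conicHull f u = conicHull (L ∘ f) u := by
  ext y
  constructor
  · rintro ⟨_, ⟨lam, hlam, rfl⟩, rfl⟩
    exact ⟨lam, hlam, by simp⟩
  · rintro ⟨lam, hlam, rfl⟩
    exact ⟨_, ⟨lam, hlam, rfl⟩, by simp⟩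

/-- Along a linear dependence `g`, move the coefficients `lam` to `lam - τ g` with the largest `τ`
keeping them nonnegative; this kills one of them. -/
theorem exists_mem_conicHull_erase_of_not_linearIndepOn [DecidableEq ι] (hu : ¬LinearIndepOn ℝ f u)
    (hx : x ∈ conicHull f u) : ∃ i ∈ u, x ∈ conicHull f (u.erase i) := by
  obtain ⟨lam, hlam, rfl⟩ := hx
  obtain ⟨g, hg, hgpos⟩ : ∃ g : ι → ℝ, ∑ i ∈ u, g i • f i = 0 ∧ ∃ i ∈ u, 0 < g i := by
    obtain ⟨g, hg, i, hi, hgi⟩ := not_linearIndepOn_finset_iff.mp hu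
    rcases hgi.lt_or_gt with hneg | hpos
    · exact ⟨-g, by simp [hg], i, hi, by simpa using hneg⟩
    · exact ⟨g, hg, i, hi, hpos⟩
  obtain ⟨i₀, hi₀, hmin⟩ := ({i ∈ u | 0 < g i} : Finset ι).exists_min_image (fun i => lam i / g i)
    (by simpa [Finset.Nonempty] using hgpos)
  rw [Finset.mem_filter] at hi₀
  set τ := lam i₀ / g i₀
  have hτ : 0 ≤ τ := div_nonneg (hlam i₀ hi₀.1) hi₀.2.le
  have hlam' : ∀ i ∈ u, 0 ≤ lam i - τ * g i := by
    intro i hi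
    rcases le_or_gt (g i) 0 with hgi | hgi
    · nlinarith [hlam i hi]
    · have := hmin i (Finset.mem_filter.mpr ⟨hi, hgi⟩)
      rw [div_le_div_iff₀ hi₀.2 hgi] at this
      rw [sub_nonneg, div_mul_eq_mul_div, div_le_iff₀ hi₀.2]
      linarith
  have hsum : ∑ i ∈ u, (lam i - τ * g i) • f i = ∑ i ∈ u, lam i • f i := by
    simp only [sub_smul, mul_smul, Finset.sum_sub_distrib, ← Finset.smul_sum, hg, smul_zero,
      sub_zero]
  have hi₀zero : lam i₀ - τ * g i₀ = 0 := by
    simp only [τ, div_mul_cancel₀ _ hi₀.2.ne', sub_self]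
  refine ⟨i₀, hi₀.1, fun i => lam i - τ * g i, fun i hi => hlam' i (Finset.mem_of_mem_erase hi), ?_⟩
  rw [Finset.sum_erase _ (by simp only [hi₀zero, zero_smul]), hsum]

theorem exists_linearIndepOn_of_mem_conicHull [DecidableEq ι] (hx : x ∈ conicHull f u) :
    ∃ t ⊆ u, LinearIndepOn ℝ f t ∧ x ∈ conicHull f t := by
  induction u using Finset.strongInduction with
  | H u ih =>
    by_cases hu : LinearIndepOn ℝ f u
    · exact ⟨u, subset_rfl, hu, hx⟩
    · obtain ⟨i, hi, hxi⟩ := exists_mem_conicHull_erase_of_not_linearIndepOn hu hx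
      obtain ⟨t, htu, ht, hxt⟩ := ih _ (Finset.erase_ssubset hi) hxi
      exact ⟨t, htu.trans (Finset.erase_subset i u), ht, hxt⟩

variable [TopologicalSpace V] [IsTopologicalAddGroup V] [ContinuousSMul ℝ V] [T2Space V]

theorem isClosed_conicHull_of_linearIndepOn (ht : LinearIndepOn ℝ f t) :
    IsClosed (conicHull f t : Set V) := by
  classical
  let L := Fintype.linearCombination ℝ fun i : t => f i
  have hL : IsClosedEmbedding L :=
    L.isClosedEmbedding_of_injective
      (LinearMap.ker_eq_bot.mpr ht.fintypeLinearCombination_injective)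
  suffices (conicHull f t : Set V) = L '' Set.Ici 0 from this ▸ hL.isClosedMap _ isClosed_Ici
  ext x
  constructor
  · rintro ⟨lam, hlam, rfl⟩
    exact ⟨fun i => lam i, fun i => hlam i i.2, by
      simp [L, Fintype.linearCombination_apply, Finset.sum_attach t fun i => lam i • f i]⟩
  · rintro ⟨g, hg, rfl⟩
    refine ⟨fun i => if h : i ∈ t then g ⟨i, h⟩ else 0,
      fun i hi => by simpa [hi] using hg ⟨i, hi⟩, ?_⟩
    rw [Fintype.linearCombination_apply, ← Finset.sum_coe_sort t]
    simp

theorem isClosed_conicHull (f : ι → V) (u : Finset ι) : IsClosed (conicHull f u : Set V) := by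
  classical
  have : (conicHull f u : Set V) =
      ⋃ t ∈ u.powerset.filter fun t : Finset ι => LinearIndepOn ℝ f t, (conicHull f t : Set V) := by
    ext x
    simp only [Set.mem_iUnion, Finset.mem_filter, Finset.mem_powerset, SetLike.mem_coe, exists_prop]
    constructor
    · intro hx
      obtain ⟨t, htu, ht, hxt⟩ := exists_linearIndepOn_of_mem_conicHull hx
      exact ⟨t, ⟨htu, ht⟩, hxt⟩
    · rintro ⟨t, ⟨htu, -⟩, hxt⟩
      exact conicHull_mono htu hxt
  rw [this]
  exact isClosed_biUnion_finset fun t ht =>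
    isClosed_conicHull_of_linearIndepOn (Finset.mem_filter.mp ht).2

end ConicHull

theorem Matrix.IsUpperTriangular.mul_apply_self {n R : Type*} [Fintype n] [LinearOrder n]
    [NonUnitalNonAssocSemiring R] {M N : Matrix n n R} (hM : M.IsUpperTriangular)
    (hN : N.IsUpperTriangular) (i : n) : (M * N) i i = M i i * N i i := by
  rw [Matrix.mul_apply, Finset.sum_eq_single i _ (by simp)]
  intro j _ hji
  rcases hji.lt_or_gt with h | h
  · rw [hM h, zero_mul]
  · rw [hN h, mul_zero]

theorem tendsto_pow_mul_inv_pow_nhdsGT_zero {a b : ℕ} (hab : a ≤ b) :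
    Tendsto (fun ε : ℝ => ε ^ b * (ε ^ a)⁻¹) (𝓝[>] 0) (𝓝 (if a = b then 1 else 0)) := by
  have hlim : Tendsto (fun ε : ℝ => ε ^ (b - a)) (𝓝[>] 0) (𝓝 (if a = b then 1 else 0)) := by
    have := tendsto_nhdsWithin_of_tendsto_nhds (s := Set.Ioi 0)
      ((continuous_pow (b - a)).tendsto (0 : ℝ))
    simpa only [zero_pow_eq, show b - a = 0 ↔ a = b by omega] using this
  refine hlim.congr' ?_
  filter_upwards [self_mem_nhdsWithin] with ε hε
  exact pow_sub₀ ε (ne_of_gt hε) hab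

theorem eventually_pos_vecMul_of_isUpperTriangular {n : Type*} [Fintype n] [LinearOrder n]
    {idx : n → ℕ} (hidx : StrictMono idx) {A : Matrix n n ℝ} (hA : A.IsUpperTriangular)
    (hdiag : ∀ m, 0 < A m m) :
    ∀ᶠ ε in 𝓝[>] (0 : ℝ), ∀ m, 0 < ((fun j => (ε ^ idx j)⁻¹) ᵥ* A) m := by
  refine eventually_all.mpr fun m => ?_
  have hlim : Tendsto (fun ε : ℝ => ε ^ idx m * ((fun j => (ε ^ idx j)⁻¹) ᵥ* A) m)
      (𝓝[>] 0) (𝓝 (A m m)) := by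
    simp only [Matrix.vecMul, dotProduct, Finset.mul_sum, ← mul_assoc]
    rw [show A m m = ∑ j, (if idx j = idx m then 1 else 0) * A j m by
      simp [hidx.injective.eq_iff]]
    refine tendsto_finsetSum _ fun j _ => ?_
    rcases le_or_gt j m with hjm | hmj
    · exact (tendsto_pow_mul_inv_pow_nhdsGT_zero (hidx.monotone hjm)).mul_const _
    · simpa only [hA hmj, mul_zero] using tendsto_const_nhds
  filter_upwards [hlim.eventually (lt_mem_nhds (hdiag m)), self_mem_nhdsWithin] with ε hε hεpos
  exact pos_of_mul_pos_right hε (pow_pos hεpos _).le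

theorem eventually_mem_of_unitriangular_rows {n : Type*} [Fintype n] [LinearOrder n]
    {idx : n → ℕ} (hidx : StrictMono idx) {K : PointedCone ℝ (n → ℝ)} {W : Matrix n n ℝ}
    (hW : W.IsUpperTriangular) (hdiag : ∀ m, W m m = 1) (hWK : ∀ m, W m ∈ K) :
    ∀ᶠ ε in 𝓝[>] (0 : ℝ), (fun j => (ε ^ idx j)⁻¹) ∈ K := by
  classical
  have hdet : IsUnit W.det := by simp [Matrix.det_of_isUpperTriangular hW, hdiag]
  have := W.invertibleOfIsUnitDet hdet
  have hA : W⁻¹.IsUpperTriangular := Matrix.blockTriangular_inv_of_blockTriangular hW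
  have hAdiag (m : n) : W⁻¹ m m = 1 := by
    simpa [Matrix.nonsing_inv_mul _ hdet, hdiag] using (hA.mul_apply_self hW m).symm
  filter_upwards [eventually_pos_vecMul_of_isUpperTriangular hidx hA (by simp [hAdiag])]
    with ε hε
  set x : n → ℝ := fun j => (ε ^ idx j)⁻¹
  rw [show x = (x ᵥ* W⁻¹) ᵥ* W by
    rw [Matrix.vecMul_vecMul, Matrix.nonsing_inv_mul _ hdet, Matrix.vecMul_one],
    Matrix.vecMul_eq_sum]
  exact sum_mem fun m _ => K.smul_mem (hε m).le (hWK m)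

theorem IsPositiveCone.exists_unitriangular_rows {s : ℕ} {C : Set (Fin s → ℝ)}
    (hC : IsPositiveCone C) :
    ∃ W : Matrix (Fin s) (Fin s) ℝ, W.IsUpperTriangular ∧ (∀ m, W m m = 1) ∧ ∀ m, W m ∈ C := by
  have hrow (m : Fin s) : ∃ w ∈ C, (∀ l < m, w l = 0) ∧ w m = 1 := by
    obtain ⟨w, hwC, hw⟩ := hC (m + 1) (by omega) m.2
    have hw' (l : Fin s) (hl : l ≤ m) : w l = if (l : ℕ) + 1 = m + 1 then 1 else 0 :=
      congrFun hw ⟨l, Nat.lt_succ_of_le hl⟩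
    exact ⟨w, hwC, fun l hl => by simpa [Fin.val_ne_of_ne hl.ne] using hw' l hl.le,
      by simpa using hw' m le_rfl⟩
  choose W hWC hW0 hW1 using hrow
  exact ⟨W, fun m l hlm => hW0 m l hlm, hW1, hWC⟩

theorem tendsto_smul_prProj_eps_vector {s k : ℕ} {idx : Fin s → ℕ} (hidx : StrictMono idx)
    (hk : 1 ≤ k) (hks : k ≤ s) :
    Tendsto (fun ε : ℝ => ε ^ idx ⟨k - 1, by omega⟩ • prProj k hks fun j => (ε ^ idx j)⁻¹)
      (𝓝[>] 0) (𝓝 (lastUnit k)) := by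
  refine tendsto_pi_nhds.mpr fun j => ?_
  have hj : Fin.castLE hks j ≤ ⟨k - 1, by omega⟩ := Fin.mk_le_mk.mpr (by omega)
  convert tendsto_pow_mul_inv_pow_nhdsGT_zero (hidx.monotone hj) using 2
  · rfl
  · simp only [lastUnit, hidx.injective.eq_iff, Fin.ext_iff, Fin.val_castLE]
    exact if_congr (by omega) rfl rfl

theorem lastUnit_mem_prProj_image_of_eventually {s k : ℕ} {idx : Fin s → ℕ}
    (hidx : StrictMono idx) (hk : 1 ≤ k) (hks : k ≤ s) {ι : Type*} {f : ι → (Fin s → ℝ)}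
    {u : Finset ι} (h : ∀ᶠ ε in 𝓝[>] (0 : ℝ), (fun j => (ε ^ idx j)⁻¹) ∈ conicHull f u) :
    lastUnit k ∈ prProj k hks '' conicHull f u := by
  let K := (conicHull f u).map (LinearMap.funLeft ℝ ℝ (Fin.castLE hks))
  have hK : IsClosed (K : Set (Fin k → ℝ)) := by
    rw [PointedCone.coe_map, image_conicHull]
    exact isClosed_conicHull _ _
  refine hK.mem_of_tendsto (tendsto_smul_prProj_eps_vector hidx hk hks) ?_
  filter_upwards [h, self_mem_nhdsWithin] with ε hε hεpos
  exact K.smul_mem (pow_pos hεpos _).le ⟨_, hε, rfl⟩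

theorem eventually_nhdsGT_zero_iff {P : ℝ → Prop} :
    (∀ᶠ ε in 𝓝[>] 0, P ε) ↔ ∃ ε₀ > 0, ∀ ε, 0 < ε → ε < ε₀ → P ε := by
  simp [(nhdsGT_basis (0 : ℝ)).eventually_iff, and_imp]

theorem isPositiveCone_iff_eps_vector_mem_general {s : ℕ}
    (idx : Fin s → ℕ) (hmono : StrictMono idx)
    (C : Set (Fin s → ℝ))
    (hC : ∃ G : Finset (Fin s → ℝ), C = {x | ∃ lam : (Fin s → ℝ) → ℝ,
      (∀ v ∈ G, 0 ≤ lam v) ∧ x = ∑ v ∈ G, lam v • v}) :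
    IsPositiveCone C ↔
      ∃ ε₀ > (0 : ℝ), ∀ ε : ℝ, 0 < ε → ε < ε₀ →
        (fun j : Fin s => (ε ^ idx j)⁻¹) ∈ C := by
  obtain ⟨G, hG⟩ := hC
  have hC : C = conicHull id G := hG
  subst hC
  rw [← eventually_nhdsGT_zero_iff]
  constructor
  · intro hpos
    obtain ⟨W, hW, hdiag, hWC⟩ := hpos.exists_unitriangular_rows
    exact eventually_mem_of_unitriangular_rows hmono hW hdiag hWC
  · exact fun h k hk hks => lastUnit_mem_prProj_image_of_eventually hmono hk hks h

/-- Let `i₁ < … < i_s` be positive integers and `C ⊆ ℝ^s` a polyhedral cone.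
Then `C` is positive iff `(ε^{−i₁},…,ε^{−i_s}) ∈ C` for all sufficiently small
`ε > 0`. -/
theorem isPositiveCone_iff_eps_vector_mem {s : ℕ}
    (idx : Fin s → ℕ) (hmono : StrictMono idx) (hpos : ∀ j, 0 < idx j)
    (C : Set (Fin s → ℝ))
    (hC : ∃ G : Finset (Fin s → ℝ), C = {x | ∃ lam : (Fin s → ℝ) → ℝ,
      (∀ v ∈ G, 0 ≤ lam v) ∧ x = ∑ v ∈ G, lam v • v}) :
    IsPositiveCone C ↔
      ∃ ε₀ > (0 : ℝ), ∀ ε : ℝ, 0 < ε → ε < ε₀ →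
        (fun j : Fin s => (ε ^ idx j)⁻¹) ∈ C :=
  isPositiveCone_iff_eps_vector_mem_general idx hmono C hC

end
end

section
/- Let u₁,…,u_m ∈ ℝ^s be linearly independent and let C := {Σ_{j=1}^m λ_j u_j : λ_j ≥ 0} be the simplicial cone they generate. For 1 ≤ k ≤ s, let C^{(k)} be the smallest face of C containing C ∩ ker(pr_k), i.e., the cone generated by {u_j : some x ∈ C ∩ ker(pr_k) has positive u_j-coefficient}. Then for all 1 ≤ j ≤ k ≤ s, the image of C^{(k)} under the j-th coordinate projection ℝ^s → ℝ is either {0} or all of ℝ. -/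
noncomputable section

/-- Let `u₁,…,u_m ∈ ℝ^s` be linearly independent generating the simplicial cone
`C`, and for `1 ≤ k ≤ s` let `C^{(k)}` be the smallest face of `C` containing
`C ∩ ker(pr_k)`, i.e. the cone generated by those `u_i` appearing with a positive
coefficient in some element of `C ∩ ker(pr_k)`.  Then for `1 ≤ j ≤ k` the image
of `C^{(k)}` under the `j`-th coordinate projection is `{0}` or all of `ℝ`. -/
theorem coord_image_face_eq_singleton_or_univ {s m : ℕ}
    (u : Fin m → (Fin s → ℝ)) (hu : LinearIndependent ℝ u)
    (k : ℕ) (hk1 : 1 ≤ k) (hks : k ≤ s)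
    (j : Fin s) (hj : (j : ℕ) < k)
    (Jk : Set (Fin m))
    (hJk : Jk = {i | ∃ mu : Fin m → ℝ, (∀ l, 0 ≤ mu l) ∧
      prProj k hks (∑ l, mu l • u l) = 0 ∧ 0 < mu i})
    (Cface : Set (Fin s → ℝ))
    (hCface : Cface = {x | ∃ lam : Fin m → ℝ, (∀ i, 0 ≤ lam i) ∧
      (∀ i, i ∉ Jk → lam i = 0) ∧ x = ∑ i, lam i • u i}) :
    ((fun x : Fin s → ℝ => x j) '' Cface = {0}) ∨
    ((fun x : Fin s → ℝ => x j) '' Cface = Set.univ) := by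
  classical
  -- j-th coordinate of anything killed by prProj is 0
  have hjcoord : ∀ x : Fin s → ℝ, prProj k hks x = 0 → x j = 0 := by
    intro x hx
    have h := congrFun hx ⟨(j : ℕ), hj⟩
    have hcast : Fin.castLE hks ⟨(j : ℕ), hj⟩ = j := by
      ext; simp [Fin.castLE]
    simpa [prProj, hcast] using h
  have hwit : ∀ i ∈ Jk, ∃ mu : Fin m → ℝ, (∀ l, 0 ≤ mu l) ∧
      prProj k hks (∑ l, mu l • u l) = 0 ∧ 0 < mu i := by
    intro i hi; rw [hJk] at hi; exact hi
  choose! mus h1 h2 h3 using hwit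
  set M : Fin m → ℝ := fun l => ∑ i, if i ∈ Jk then mus i l else 0 with hM
  have hM0 : ∀ l, 0 ≤ M l := by
    intro l
    apply Finset.sum_nonneg
    intro i _
    by_cases hi : i ∈ Jk
    · simpa [hi] using h1 i hi l
    · simp [hi]
  have hMpos : ∀ i ∈ Jk, 0 < M i := by
    intro i hi
    apply Finset.sum_pos' (fun i' _ => ?_) ⟨i, Finset.mem_univ i, by simpa [hi] using h3 i hi⟩
    by_cases hi' : i' ∈ Jk
    · simpa [hi'] using h1 i' hi' i
    · simp [hi']
  have hMsupp : ∀ l, l ∉ Jk → M l = 0 := by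
    intro l hl
    apply Finset.sum_eq_zero
    intro i _
    by_cases hi : i ∈ Jk
    · simp only [hi, if_true]
      by_contra hne
      have hpos : 0 < mus i l := lt_of_le_of_ne (h1 i hi l) (Ne.symm hne)
      exact hl (by rw [hJk]; exact ⟨mus i, h1 i hi, h2 i hi, hpos⟩)
    · simp [hi]
  have hMj : ∑ l, M l * u l j = 0 := by
    have : ∑ l, M l * u l j = ∑ i, ∑ l, (if i ∈ Jk then mus i l else 0) * u l j := by
      rw [Finset.sum_comm]
      simp [hM, Finset.sum_mul]
    rw [this]
    apply Finset.sum_eq_zero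
    intro i _
    by_cases hi : i ∈ Jk
    · simp only [hi, if_true]
      have := hjcoord _ (h2 i hi)
      simpa [Finset.sum_apply] using this
    · simp [hi]
  -- coordinate of a general element
  have hcoord : ∀ lam : Fin m → ℝ, (∑ i, lam i • u i) j = ∑ i, lam i * u i j := by
    intro lam; simp [Finset.sum_apply]
  by_cases hz : ∀ i ∈ Jk, u i j = 0
  · left
    apply Set.eq_singleton_iff_unique_mem.mpr
    constructor
    · refine ⟨0, ?_, rfl⟩
      rw [hCface]
      exact ⟨0, fun _ => le_refl 0, fun _ _ => rfl, by simp⟩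
    · rintro t ⟨x, hx, rfl⟩
      rw [hCface] at hx
      obtain ⟨lam, hlam0, hlamsupp, rfl⟩ := hx
      show (∑ i, lam i • u i) j = 0
      rw [hcoord]
      apply Finset.sum_eq_zero
      intro i _
      by_cases hi : i ∈ Jk
      · simp [hz i hi]
      · simp [hlamsupp i hi]
  · right
    push_neg at hz
    obtain ⟨i0, hi0, hne⟩ := hz
    apply Set.eq_univ_of_forall
    intro t
    set d : ℝ := t / u i0 j with hd
    set c : ℝ := |d| / M i0 with hc
    have hc0 : 0 ≤ c := div_nonneg (abs_nonneg d) (hM0 i0)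
    have hMi0 : M i0 ≠ 0 := ne_of_gt (hMpos i0 hi0)
    set lam : Fin m → ℝ := fun l => c * M l + if l = i0 then d else 0 with hlam
    refine ⟨∑ i, lam i • u i, ?_, ?_⟩
    · rw [hCface]
      refine ⟨lam, ?_, ?_, rfl⟩
      · intro i
        by_cases hi : i = i0
        · subst hi
          simp only [hlam, if_true]
          rw [hc, div_mul_cancel₀ _ hMi0]
          have := abs_nonneg d
          have := neg_abs_le d
          simp
          linarith [neg_abs_le d]
        · simp only [hlam, hi, if_false, add_zero]
          exact mul_nonneg hc0 (hM0 i)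
      · intro i hi
        have hii0 : i ≠ i0 := fun h => hi (h ▸ hi0)
        simp [hlam, hii0, hMsupp i hi]
    · show (∑ i, lam i • u i) j = t
      rw [hcoord]
      have : ∑ i, lam i * u i j = c * (∑ i, M i * u i j) + d * u i0 j := by
        simp only [hlam, add_mul, Finset.sum_add_distrib, Finset.mul_sum, mul_assoc]
        congr 1
        simp [ite_mul]
      rw [this, hMj, mul_zero, zero_add, hd, div_mul_cancel₀ _ hne]



end
end

section
/- Let u₁,…,u_s ∈ ℝ^s be linearly independent and suppose the tuple (u₁,…,u_s) is positively ordered. Then det(A) > 0, where A is the s × s matrix whose j-th column is u_j. -/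
noncomputable section

/-- A tuple `(v₁,…,v_m)` of vectors in `ℝ^m` is positively ordered if for every
`1 ≤ k ≤ m` the cone in `ℝ^k` generated by `pr_k(v₁),…,pr_k(v_k)` is positive. -/
def PositivelyOrdered {m : ℕ} (v : Fin m → (Fin m → ℝ)) : Prop :=
  ∀ k, 1 ≤ k → ∀ hk : k ≤ m,
    IsPositiveCone {x : Fin k → ℝ | ∃ lam : Fin m → ℝ, (∀ i, 0 ≤ lam i) ∧
      (∀ i : Fin m, ¬ ((i : ℕ) < k) → lam i = 0) ∧
      x = ∑ i, lam i • prProj k hk (v i)}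

/-- If `u₁,…,u_s ∈ ℝ^s` are linearly independent and the tuple `(u₁,…,u_s)` is
positively ordered, then the determinant of the matrix whose `j`-th column is
`u_j` is positive. -/
theorem det_pos_of_positivelyOrdered {s : ℕ}
    (u : Fin s → (Fin s → ℝ)) (hu : LinearIndependent ℝ u)
    (hord : PositivelyOrdered u) :
    0 < Matrix.det (Matrix.of fun i j : Fin s => u j i) := by
  classical
  -- For each k, extract nonnegative coefficients expressing the last unit vector.
  have key : ∀ k : Fin s, ∃ lam : Fin s → ℝ, (∀ i, 0 ≤ lam i) ∧
      (∀ i : Fin s, ¬ ((i : ℕ) < (k : ℕ) + 1) → lam i = 0) ∧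
      lastUnit ((k : ℕ) + 1) = ∑ i, lam i • prProj ((k : ℕ) + 1) k.isLt (u i) := by
    intro k
    have h1 := hord ((k : ℕ) + 1) (Nat.succ_le_succ (Nat.zero_le _)) k.isLt
    have h2 := h1 ((k : ℕ) + 1) (Nat.succ_le_succ (Nat.zero_le _)) le_rfl
    obtain ⟨x, hx, hx2⟩ := h2
    obtain ⟨lam, h0, hz, hsum⟩ := hx
    have hxid : prProj ((k : ℕ) + 1) le_rfl x = x := by
      funext j
      exact congrArg x (Fin.ext rfl)
    refine ⟨lam, h0, hz, ?_⟩
    rw [← hx2, hxid, hsum]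
  choose lam hnn hzero heq using key
  set A : Matrix (Fin s) (Fin s) ℝ := Matrix.of (fun i j : Fin s => u j i) with hA
  set M : Matrix (Fin s) (Fin s) ℝ := Matrix.of (fun i k : Fin s => lam k i) with hM
  -- entries of A * M in the lower-left region (j ≤ k)
  have hW : ∀ (k j : Fin s), (j : ℕ) < (k : ℕ) + 1 →
      (A * M) j k = if (j : ℕ) = (k : ℕ) then 1 else 0 := by
    intro k j hjk
    have hj' : (j : ℕ) < (k : ℕ) + 1 := hjk
    have := congrFun (heq k) ⟨(j : ℕ), hj'⟩
    simp only [lastUnit, Finset.sum_apply, Pi.smul_apply, prProj, smul_eq_mul] at this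
    have hcast : Fin.castLE k.isLt (⟨(j : ℕ), hj'⟩ : Fin ((k : ℕ) + 1)) = j :=
      Fin.ext rfl
    rw [hcast] at this
    rw [Matrix.mul_apply]
    simp only [hA, hM, Matrix.of_apply]
    rw [show (∑ i, u i j * lam k i) = ∑ i, lam k i * u i j by
      exact Finset.sum_congr rfl fun i _ => mul_comm _ _]
    rw [← this]
    simp
  -- A * M is lower triangular with unit diagonal
  have hWtri : (A * M).BlockTriangular OrderDual.toDual := by
    intro j k hlt
    have hlt' : (j : ℕ) < (k : ℕ) := hlt
    rw [hW k j (Nat.lt_succ_of_lt hlt')]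
    simp [Nat.ne_of_lt hlt']
  have hWdet : (A * M).det = 1 := by
    rw [Matrix.det_of_lowerTriangular _ hWtri]
    have : ∀ k : Fin s, (A * M) k k = 1 := by
      intro k
      rw [hW k k (Nat.lt_succ_self _)]
      simp
    simp [this]
  -- M is upper triangular with nonnegative diagonal
  have hMtri : M.BlockTriangular id := by
    intro i k hlt
    have : ¬ ((i : ℕ) < (k : ℕ) + 1) := by
      simp only [id] at hlt
      omega
    simpa [hM] using hzero k i this
  have hMdet : M.det = ∏ k, M k k := Matrix.det_of_upperTriangular hMtri
  have hMnn : 0 ≤ M.det := by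
    rw [hMdet]
    exact Finset.prod_nonneg fun k _ => hnn k k
  have hmul : A.det * M.det = 1 := by
    rw [← Matrix.det_mul, hWdet]
  nlinarith [hmul, hMnn]

end
end

section
/- Let w₁,…,w_r ∈ ℤⁿ have all coordinates ≥ 0, be linearly independent over ℚ, and let λ₁,…,λ_r ∈ ℚ satisfy Σ_{i=1}^r λ_i w_i = 𝟙 := (1,…,1). Call an index i ∈ {1,…,r} an apex with base direction ℓ ∈ {1,…,n} if (w_i)_ℓ > 0 and (w_j)_ℓ = 0 for all j ≠ i. Then: (a) if i is an apex with base direction ℓ, then λ_i = 1/(w_i)_ℓ; and (b) there exists an index i that is an apex admitting exactly one base direction ℓ and satisfying (w_i)_ℓ = 1, if and only if there exists an index i that is an apex admitting exactly one base direction and satisfying λ_i ∈ ℤ. -/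
noncomputable section

/-- `i` is an apex with base direction `ℓ`: `(w_i)_ℓ > 0` and `(w_j)_ℓ = 0` for
all `j ≠ i`. -/
def IsApex {n r : ℕ} (w : Fin r → (Fin n → ℤ)) (i : Fin r) (ℓ : Fin n) : Prop :=
  0 < w i ℓ ∧ ∀ j : Fin r, j ≠ i → w j ℓ = 0

lemma apex_key {n r : ℕ} (w : Fin r → (Fin n → ℤ))
    (lam : Fin r → ℚ) (hsum : ∀ ℓ : Fin n, ∑ i, lam i * (w i ℓ : ℚ) = 1)
    {i : Fin r} {ℓ : Fin n} (h : IsApex w i ℓ) :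
    lam i * (w i ℓ : ℚ) = 1 := by
  have := hsum ℓ
  rwa [Finset.sum_eq_single i (fun j _ hj => by rw [h.2 j hj]; simp)
    (fun h => absurd (Finset.mem_univ i) h)] at this

/-- Combinatorial content of the lemma that a compact face contributing a
candidate pole is `UB₁` iff the corresponding cone in the link of the essential
face is a `U`-pyramid. -/
theorem apex_coeff_and_UB1_iff_UPyramid {n r : ℕ}
    (w : Fin r → (Fin n → ℤ)) (hnn : ∀ i ℓ, 0 ≤ w i ℓ)
    (hind : LinearIndependent ℚ (fun i : Fin r => fun ℓ : Fin n => (w i ℓ : ℚ)))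
    (lam : Fin r → ℚ) (hsum : ∀ ℓ : Fin n, ∑ i, lam i * (w i ℓ : ℚ) = 1) :
    (∀ (i : Fin r) (ℓ : Fin n), IsApex w i ℓ → lam i = 1 / (w i ℓ : ℚ)) ∧
    ((∃ (i : Fin r) (ℓ : Fin n), IsApex w i ℓ ∧
        (∀ ℓ' : Fin n, IsApex w i ℓ' → ℓ' = ℓ) ∧ w i ℓ = 1) ↔
      (∃ i : Fin r, (∃ ℓ : Fin n, IsApex w i ℓ ∧
        (∀ ℓ' : Fin n, IsApex w i ℓ' → ℓ' = ℓ)) ∧ ∃ m : ℤ, lam i = (m : ℚ))) := by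
  have key : ∀ {i : Fin r} {ℓ : Fin n}, IsApex w i ℓ → lam i * (w i ℓ : ℚ) = 1 := fun h => apex_key w lam hsum h
  constructor
  · intro i ℓ h
    have hw : (w i ℓ : ℚ) ≠ 0 := by exact_mod_cast h.1.ne'
    field_simp
    exact key h
  · constructor
    · rintro ⟨i, ℓ, hap, huniq, hone⟩
      refine ⟨i, ⟨ℓ, hap, huniq⟩, 1, ?_⟩
      have := key hap
      rw [hone] at this
      simpa using this
    · rintro ⟨i, ⟨ℓ, hap, huniq⟩, m, hm⟩
      refine ⟨i, ℓ, hap, huniq, ?_⟩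
      have h1 : (m : ℚ) * (w i ℓ : ℚ) = 1 := by rw [← hm]; exact key hap
      have h2 : m * w i ℓ = 1 := by exact_mod_cast h1
      exact Int.eq_one_of_mul_eq_one_left (le_of_lt hap.1) h2

end
end

section
/- Let w₁,…,w_r ∈ ℤⁿ have all coordinates ≥ 0, be linearly independent over ℚ, and let λ₁,…,λ_r ∈ ℚ satisfy Σ_{i=1}^r λ_i w_i = 𝟙 := (1,…,1). Call an index i an apex with base direction ℓ ∈ {1,…,n} if (w_i)_ℓ > 0 and (w_j)_ℓ = 0 for all j ≠ i. Define E := {i : λ_i ∉ ℤ}, 𝒜 := {i : λ_i ∈ ℤ and i is an apex (for some base direction)}, C₁ := {i : λ_i ∈ ℤ, λ_i > 0, and i is not an apex}, C₂ := {i : λ_i ∈ ℤ, λ_i ≤ 0}, and J := {ℓ ∈ {1,…,n} : some i ∈ 𝒜 is an apex with base direction ℓ}. Then {𝒜, C₁, C₂, E} is a partition of {1,…,r}, and: (1) for every ℓ ∈ {1,…,n} there exists i ∈ 𝒜 ∪ C₁ ∪ E with (w_i)_ℓ > 0; and (2) {ℓ ∈ {1,…,n} : some i ∈ C₂ ∪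 E has (w_i)_ℓ > 0} = {1,…,n} ∖ J. -/
noncomputable section

/-- Combinatorial content of the lemma that the cone `C_G ∖ C_E` in the link of
the essential face admits a full partition `𝒜 ⊔ C₁ ⊔ C₂` . -/
theorem fullPartition_of_contributing_face {n r : ℕ}
    (w : Fin r → (Fin n → ℤ)) (hnn : ∀ i ℓ, 0 ≤ w i ℓ)
    (hind : LinearIndependent ℚ (fun i : Fin r => fun ℓ : Fin n => (w i ℓ : ℚ)))
    (lam : Fin r → ℚ) (hsum : ∀ ℓ : Fin n, ∑ i, lam i * (w i ℓ : ℚ) = 1)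
    (E : Set (Fin r)) (hE : E = {i | ¬ ∃ m : ℤ, lam i = (m : ℚ)})
    (A : Set (Fin r)) (hA : A = {i | (∃ m : ℤ, lam i = (m : ℚ)) ∧ ∃ ℓ, IsApex w i ℓ})
    (C₁ : Set (Fin r)) (hC₁ : C₁ = {i | (∃ m : ℤ, lam i = (m : ℚ)) ∧ 0 < lam i ∧
      ¬ ∃ ℓ, IsApex w i ℓ})
    (C₂ : Set (Fin r)) (hC₂ : C₂ = {i | (∃ m : ℤ, lam i = (m : ℚ)) ∧ lam i ≤ 0})
    (J : Set (Fin n)) (hJ : J = {ℓ | ∃ i ∈ A, IsApex w i ℓ}) :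
    (A ∪ C₁ ∪ C₂ ∪ E = Set.univ) ∧
    (Disjoint A C₁ ∧ Disjoint A C₂ ∧ Disjoint A E ∧
      Disjoint C₁ C₂ ∧ Disjoint C₁ E ∧ Disjoint C₂ E) ∧
    (∀ ℓ : Fin n, ∃ i ∈ A ∪ C₁ ∪ E, 0 < w i ℓ) ∧
    ({ℓ : Fin n | ∃ i ∈ C₂ ∪ E, 0 < w i ℓ} = Set.univ \ J) := by
  subst hE hA hC₁ hC₂ hJ
  -- if `i` is an apex at `ℓ`, the sum collapses to a single term
  have key : ∀ i ℓ, IsApex w i ℓ → lam i * (w i ℓ : ℚ) = 1 := by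
    intro i ℓ ha
    have h := hsum ℓ
    rwa [Finset.sum_eq_single i
      (fun j _ hj => by rw [ha.2 j hj]; simp) (by simp)] at h
  have apos : ∀ i ℓ, IsApex w i ℓ → 0 < lam i := by
    intro i ℓ ha
    have h1 := key i ℓ ha
    have hw : (0 : ℚ) < (w i ℓ : ℚ) := by exact_mod_cast ha.1
    nlinarith
  refine ⟨?_, ⟨?_, ?_, ?_, ?_, ?_, ?_⟩, ?_, ?_⟩
  · -- union = univ
    ext i
    simp only [Set.mem_union, Set.mem_setOf_eq, Set.mem_univ, iff_true]
    by_cases hm : ∃ m : ℤ, lam i = (m : ℚ)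
    · by_cases hap : ∃ ℓ, IsApex w i ℓ
      · exact Or.inl (Or.inl (Or.inl ⟨hm, hap⟩))
      · rcases le_or_gt (lam i) 0 with h0 | h0
        · exact Or.inl (Or.inr ⟨hm, h0⟩)
        · exact Or.inl (Or.inl (Or.inr ⟨hm, h0, hap⟩))
    · exact Or.inr hm
  · rw [Set.disjoint_left]
    rintro i ⟨_, hap⟩ ⟨_, _, hnap⟩
    exact hnap hap
  · rw [Set.disjoint_left]
    rintro i ⟨_, ℓ, hap⟩ ⟨_, h0⟩
    exact absurd (apos i ℓ hap) (not_lt.mpr h0)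
  · rw [Set.disjoint_left]
    rintro i ⟨hm, _⟩ hne
    exact hne hm
  · rw [Set.disjoint_left]
    rintro i ⟨_, h0, _⟩ ⟨_, h0'⟩
    exact absurd h0 (not_lt.mpr h0')
  · rw [Set.disjoint_left]
    rintro i ⟨hm, _⟩ hne
    exact hne hm
  · rw [Set.disjoint_left]
    rintro i ⟨hm, _⟩ hne
    exact hne hm
  · -- condition (1)
    intro ℓ
    have hex : ∃ i, 0 < lam i * (w i ℓ : ℚ) := by
      by_contra hc
      push_neg at hc
      have : ∑ i, lam i * (w i ℓ : ℚ) ≤ 0 :=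
        Finset.sum_nonpos (fun i _ => hc i)
      linarith [hsum ℓ]
    obtain ⟨i, hi⟩ := hex
    have hwpos : 0 < w i ℓ := by
      rcases lt_or_eq_of_le (hnn i ℓ) with h | h
      · exact h
      · exfalso; rw [← h] at hi; simp at hi
    have hwq : (0 : ℚ) < (w i ℓ : ℚ) := by exact_mod_cast hwpos
    have hlpos : 0 < lam i := by nlinarith
    refine ⟨i, ?_, hwpos⟩
    by_cases hm : ∃ m : ℤ, lam i = (m : ℚ)
    · by_cases hap : ∃ ℓ', IsApex w i ℓ'
      · exact Or.inl (Or.inl ⟨hm, hap⟩)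
      · exact Or.inl (Or.inr ⟨hm, hlpos, hap⟩)
    · exact Or.inr hm
  · -- condition (2)
    ext ℓ
    simp only [Set.mem_setOf_eq, Set.mem_diff, Set.mem_univ, true_and, Set.mem_union]
    constructor
    · rintro ⟨i, hi, hw⟩ ⟨i₀, hi₀A, hap⟩
      have hne : i ≠ i₀ := by
        rintro rfl
        rcases hi with hC | hE
        · exact absurd (apos i ℓ hap) (not_lt.mpr hC.2)
        · exact hE hi₀A.1
      rw [hap.2 i hne] at hw
      exact absurd hw (lt_irrefl 0)
    · intro hℓJ
      by_contra hc
      push_neg at hc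
      have hbig : ∀ i, 0 < w i ℓ → (∃ m : ℤ, lam i = (m : ℚ)) ∧ 1 ≤ lam i := by
        intro i hw
        have hm : ∃ m : ℤ, lam i = (m : ℚ) := by
          by_contra hmn
          push_neg at hmn
          exact absurd hw (not_lt.mpr (hc i (Or.inr hmn)))
        have hpos : 0 < lam i := by
          by_contra hp
          push_neg at hp
          exact absurd hw (not_lt.mpr (hc i (Or.inl ⟨hm, hp⟩)))
        obtain ⟨m, hmeq⟩ := hm
        have h1m : (1 : ℤ) ≤ m := by
          have : (0 : ℚ) < (m : ℚ) := hmeq ▸ hpos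
          exact_mod_cast this
        exact ⟨⟨m, hmeq⟩, by rw [hmeq]; exact_mod_cast h1m⟩
      set S := Finset.univ.filter (fun i => 0 < w i ℓ) with hS
      have hsum' : ∑ i ∈ S, lam i * (w i ℓ : ℚ) = 1 := by
        rw [← hsum ℓ]
        apply Finset.sum_subset (Finset.subset_univ _)
        intro i _ hiS
        have hw0 : w i ℓ = 0 := by
          by_contra h
          exact hiS (Finset.mem_filter.mpr
            ⟨Finset.mem_univ _, lt_of_le_of_ne (hnn i ℓ) (Ne.symm h)⟩)
        simp [hw0]
      have hterm : ∀ i ∈ S, (1 : ℚ) ≤ lam i * (w i ℓ : ℚ) := by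
        intro i hi
        have hw := (Finset.mem_filter.mp hi).2
        obtain ⟨_, hl⟩ := hbig i hw
        have hwq : (1 : ℚ) ≤ (w i ℓ : ℚ) := by exact_mod_cast hw
        nlinarith
      have hcard : (S.card : ℚ) ≤ 1 := by
        calc (S.card : ℚ) = ∑ _i ∈ S, (1 : ℚ) := by simp
          _ ≤ ∑ i ∈ S, lam i * (w i ℓ : ℚ) := Finset.sum_le_sum hterm
          _ = 1 := hsum'
      have hne : S.Nonempty := by
        rcases Finset.eq_empty_or_nonempty S with h | h
        · rw [h] at hsum'; simp at hsum'
        · exact h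
      have hcard1 : S.card = 1 := by
        have h1 : S.card ≤ 1 := by exact_mod_cast hcard
        have h2 : 0 < S.card := Finset.Nonempty.card_pos hne
        omega
      obtain ⟨i₀, hi₀⟩ := Finset.card_eq_one.mp hcard1
      have hi₀S : i₀ ∈ S := hi₀ ▸ Finset.mem_singleton_self i₀
      have hi₀w := (Finset.mem_filter.mp hi₀S).2
      have hap : IsApex w i₀ ℓ := by
        refine ⟨hi₀w, fun j hj => ?_⟩
        by_contra hwj
        have hjS : j ∈ S := Finset.mem_filter.mpr
          ⟨Finset.mem_univ _, lt_of_le_of_ne (hnn j ℓ) (Ne.symm hwj)⟩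
        rw [hi₀, Finset.mem_singleton] at hjS
        exact hj hjS
      exact hℓJ ⟨i₀, ⟨(hbig i₀ hi₀w).1, ℓ, hap⟩, hap⟩

end
end

section
/- Let S₀ ⊆ ℝⁿ_{≥0} be a nonempty finite set, P := conv(S₀) + ℝⁿ_{≥0}, and for u ∈ ℝⁿ_{≥0} let N(u) := inf{⟨u, w⟩ : w ∈ P}. Fix W ∈ P and set σ := {u ∈ ℝⁿ_{≥0} : ⟨u, W⟩ = N(u)} and, for δ > 0, N_{≤δ} := {u ∈ ℝⁿ_{≥0} : ⟨u, W⟩ − N(u) ≤ δ⟨u, 𝟙⟩}, where 𝟙 = (1,…,1). Let C ⊆ ℝⁿ_{≥0} be a closed set that is closed under multiplication by nonnegative scalars (a closed cone) with C ∩ σ = {0}. Then there exists δ₀ > 0 such that for all δ with 0 < δ < δ₀ one has C ∩ N_{≤δ} = {0}. -/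
open scoped Pointwise

noncomputable section

/-- The standard inner product on `ℝⁿ`. -/
def ip {n : ℕ} (u w : Fin n → ℝ) : ℝ := ∑ i, u i * w i

/-- The nonnegative orthant `ℝⁿ_{≥0}`. -/
def orthant (n : ℕ) : Set (Fin n → ℝ) := {x | ∀ i, 0 ≤ x i}

/-- The all-ones vector `𝟙 = (1,…,1)`. -/
def allOnes (n : ℕ) : Fin n → ℝ := fun _ => 1

lemma ip_add_right {n : ℕ} (u x y : Fin n → ℝ) : ip u (x + y) = ip u x + ip u y := by
  simp [ip, mul_add, Finset.sum_add_distrib]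

lemma ip_smul_left {n : ℕ} (t : ℝ) (u v : Fin n → ℝ) : ip (t • u) v = t * ip u v := by
  simp [ip, Finset.mul_sum, mul_assoc]

lemma ip_smul_right {n : ℕ} (t : ℝ) (u v : Fin n → ℝ) : ip u (t • v) = t * ip u v := by
  simp only [ip, Pi.smul_apply, smul_eq_mul, Finset.mul_sum]
  exact Finset.sum_congr rfl fun i _ => by ring

lemma ip_nonneg {n : ℕ} {u v : Fin n → ℝ} (hu : u ∈ orthant n) (hv : v ∈ orthant n) :
    0 ≤ ip u v :=
  Finset.sum_nonneg fun i _ => mul_nonneg (hu i) (hv i)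

lemma ip_linear {n : ℕ} (u : Fin n → ℝ) : IsLinearMap ℝ (fun w => ip u w) := by
  constructor
  · exact fun x y => ip_add_right u x y
  · exact fun t x => ip_smul_right t u x

lemma inf'_le_ip {n : ℕ} (S₀ : Finset (Fin n → ℝ)) (hS₀ : S₀.Nonempty) (u : Fin n → ℝ)
    (hu : u ∈ orthant n) {w : Fin n → ℝ}
    (hw : w ∈ convexHull ℝ (S₀ : Set (Fin n → ℝ)) + orthant n) :
    S₀.inf' hS₀ (fun v => ip u v) ≤ ip u w := by
  obtain ⟨c, hc, q, hq, rfl⟩ := hw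
  have h1 : S₀.inf' hS₀ (fun v => ip u v) ≤ ip u c := by
    have : convexHull ℝ (S₀ : Set (Fin n → ℝ)) ⊆ {x | S₀.inf' hS₀ (fun v => ip u v) ≤ ip u x} := by
      apply convexHull_min
      · intro v hv
        exact Finset.inf'_le (fun v => ip u v) hv
      · exact convex_halfSpace_ge (ip_linear u) _
    exact this hc
  have h2 : 0 ≤ ip u q := ip_nonneg hu hq
  rw [ip_add_right]
  linarith

lemma infP {n : ℕ} (S₀ : Finset (Fin n → ℝ)) (hS₀ : S₀.Nonempty) (u : Fin n → ℝ)
    (hu : u ∈ orthant n) :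
    sInf ((fun w => ip u w) '' (convexHull ℝ (S₀ : Set (Fin n → ℝ)) + orthant n))
      = S₀.inf' hS₀ (fun v => ip u v) := by
  have hlb : ∀ x ∈ (fun w => ip u w) '' (convexHull ℝ (S₀ : Set (Fin n → ℝ)) + orthant n),
      S₀.inf' hS₀ (fun v => ip u v) ≤ x := by
    rintro x ⟨w, hw, rfl⟩
    exact inf'_le_ip S₀ hS₀ u hu hw
  obtain ⟨v, hv, hveq⟩ := S₀.exists_mem_eq_inf' hS₀ (fun v => ip u v)
  have hmem : ip u v ∈ (fun w => ip u w) '' (convexHull ℝ (S₀ : Set (Fin n → ℝ)) + orthant n) := by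
    refine ⟨v, ⟨v, subset_convexHull ℝ _ hv, 0, fun i => le_refl 0, by simp⟩, rfl⟩
  refine le_antisymm (csInf_le ⟨_, hlb⟩ (by rw [hveq]; exact hmem)) (le_csInf ⟨_, hmem⟩ hlb)

lemma inf'_mul {n : ℕ} (S₀ : Finset (Fin n → ℝ)) (hS₀ : S₀.Nonempty) (f : (Fin n → ℝ) → ℝ)
    {t : ℝ} (ht : 0 ≤ t) :
    S₀.inf' hS₀ (fun v => t * f v) = t * S₀.inf' hS₀ f := by
  obtain ⟨v, hv, hveq⟩ := S₀.exists_mem_eq_inf' hS₀ f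
  refine le_antisymm ?_ ?_
  · refine le_trans (Finset.inf'_le (fun v => t * f v) hv) ?_
    rw [hveq]
  · refine Finset.le_inf' _ _ fun b hb => ?_
    exact mul_le_mul_of_nonneg_left (Finset.inf'_le f hb) ht

/-- A closed cone meeting the dual cone `σ_M` only at `0` misses the polyhedral
neighborhood `N_{M,≤δ}` for all sufficiently small `δ > 0`. -/
theorem closed_cone_inter_neighborhood_eq_zero {n : ℕ}
    (S₀ : Finset (Fin n → ℝ)) (hS₀ : S₀.Nonempty)
    (hS₀nn : ∀ v ∈ S₀, ∀ i, 0 ≤ v i)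
    (P : Set (Fin n → ℝ)) (hP : P = convexHull ℝ (S₀ : Set (Fin n → ℝ)) + orthant n)
    (N : (Fin n → ℝ) → ℝ) (hN : ∀ u, N u = sInf ((fun w => ip u w) '' P))
    (W : Fin n → ℝ) (hW : W ∈ P)
    (σ : Set (Fin n → ℝ)) (hσ : σ = {u ∈ orthant n | ip u W = N u})
    (Nle : ℝ → Set (Fin n → ℝ))
    (hNle : ∀ δ, Nle δ = {u ∈ orthant n | ip u W - N u ≤ δ * ip u (allOnes n)})
    (C : Set (Fin n → ℝ)) (hCsub : C ⊆ orthant n) (hCclosed : IsClosed C)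
    (hCcone : ∀ x ∈ C, ∀ t : ℝ, 0 ≤ t → t • x ∈ C)
    (hCσ : C ∩ σ = {0}) :
    ∃ δ₀ > (0 : ℝ), ∀ δ : ℝ, 0 < δ → δ < δ₀ → C ∩ Nle δ = {0} := by
  classical
  have hNorth : ∀ u ∈ orthant n, N u = S₀.inf' hS₀ (fun v => ip u v) := by
    intro u hu
    rw [hN, hP, infP S₀ hS₀ u hu]
  set g : (Fin n → ℝ) → ℝ := fun u => ip u W - S₀.inf' hS₀ (fun v => ip u v) with hg
  have hipcont : ∀ w : Fin n → ℝ, Continuous fun u : Fin n → ℝ => ip u w := by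
    intro w
    unfold ip
    exact continuous_finset_sum _ fun i _ => (continuous_apply i).mul continuous_const
  have hgcont : Continuous g :=
    (hipcont W).sub (Continuous.finset_inf'_apply hS₀ fun v _ => hipcont v)
  have hghom : ∀ (t : ℝ), 0 ≤ t → ∀ u, g (t • u) = t * g u := by
    intro t ht u
    simp only [hg, ip_smul_left]
    rw [inf'_mul S₀ hS₀ _ ht]
    ring
  have h0C : (0 : Fin n → ℝ) ∈ C := by
    have h : (0 : Fin n → ℝ) ∈ ({0} : Set (Fin n → ℝ)) := rfl
    rw [← hCσ] at h
    exact h.1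
  have h0orth : (0 : Fin n → ℝ) ∈ orthant n := fun i => le_refl 0
  have hN0 : N 0 = 0 := by
    rw [hNorth 0 h0orth]
    simp [ip]
  have h0Nle : ∀ δ : ℝ, (0 : Fin n → ℝ) ∈ Nle δ := by
    intro δ
    rw [hNle]
    refine ⟨h0orth, ?_⟩
    simp [ip, hN0]
  -- g is positive on nonzero elements of C
  have hgpos : ∀ u ∈ C, u ≠ 0 → 0 < g u := by
    intro u huC hune
    have huo : u ∈ orthant n := hCsub huC
    have hge : 0 ≤ g u := by
      have : S₀.inf' hS₀ (fun v => ip u v) ≤ ip u W := by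
        rw [hP] at hW
        exact inf'_le_ip S₀ hS₀ u huo hW
      simp only [hg]
      linarith
    rcases lt_or_eq_of_le hge with h | h
    · exact h
    · exfalso
      have : u ∈ σ := by
        rw [hσ]
        refine ⟨huo, ?_⟩
        rw [hNorth u huo]
        simp only [hg] at h
        linarith
      have : u ∈ C ∩ σ := ⟨huC, this⟩
      rw [hCσ] at this
      exact hune this
  -- positivity of the slice sum
  have hsum_pos : ∀ u ∈ C, u ≠ 0 → 0 < ip u (allOnes n) := by
    intro u huC hune
    have huo : u ∈ orthant n := hCsub huC
    obtain ⟨i, hi⟩ : ∃ i, u i ≠ 0 := by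
      by_contra h
      push_neg at h
      exact hune (funext h)
    have hipos : 0 < u i := lt_of_le_of_ne (huo i) (Ne.symm hi)
    have : u i ≤ ip u (allOnes n) := by
      simp only [ip, allOnes, mul_one]
      exact Finset.single_le_sum (fun j _ => huo j) (Finset.mem_univ i)
    linarith
  set K := C ∩ {u | ip u (allOnes n) = 1} with hK
  have hKsub : K ⊆ Set.pi Set.univ fun _ : Fin n => Set.Icc (0 : ℝ) 1 := by
    rintro u ⟨huC, hu1⟩
    intro i _
    have huo : u ∈ orthant n := hCsub huC
    refine ⟨huo i, ?_⟩
    have : u i ≤ ip u (allOnes n) := by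
      simp only [ip, allOnes, mul_one]
      exact Finset.single_le_sum (fun j _ => huo j) (Finset.mem_univ i)
    rw [hu1] at this
    exact this
  have hKclosed : IsClosed K :=
    hCclosed.inter (isClosed_eq (hipcont (allOnes n)) continuous_const)
  have hKcompact : IsCompact K :=
    IsCompact.of_isClosed_subset (isCompact_univ_pi fun _ => isCompact_Icc) hKclosed hKsub
  -- key step: nonzero elements of C ∩ Nle δ give elements of K with small g
  have key : ∀ δ₀ > (0 : ℝ), (∀ u ∈ K, δ₀ ≤ g u) →
      ∀ δ : ℝ, 0 < δ → δ < δ₀ → C ∩ Nle δ = {0} := by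
    intro δ₀ hδ₀ hKbound δ hδ hδlt
    apply Set.eq_singleton_iff_unique_mem.2
    refine ⟨⟨h0C, h0Nle δ⟩, ?_⟩
    rintro u ⟨huC, huNle⟩
    by_contra hune
    have huo : u ∈ orthant n := hCsub huC
    set s := ip u (allOnes n) with hs
    have hspos : 0 < s := hsum_pos u huC hune
    have hu' : (s⁻¹ • u) ∈ K := by
      refine ⟨hCcone u huC s⁻¹ (inv_nonneg.2 hspos.le), ?_⟩
      show ip (s⁻¹ • u) (allOnes n) = 1
      rw [ip_smul_left, ← hs, inv_mul_cancel₀ hspos.ne']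
    have h1 : δ₀ ≤ s⁻¹ * g u := by
      have := hKbound _ hu'
      rwa [hghom s⁻¹ (inv_nonneg.2 hspos.le) u] at this
    have h2 : g u ≤ δ * s := by
      rw [hNle] at huNle
      have := huNle.2
      rw [hNorth u huo] at this
      simpa only [hg, hs] using this
    have h3 : δ₀ * s ≤ g u := by
      have h := mul_le_mul_of_nonneg_left h1 hspos.le
      rw [← mul_assoc, mul_inv_cancel₀ hspos.ne', one_mul] at h
      rw [mul_comm]
      exact h
    nlinarith
  by_cases hKne : K.Nonempty
  · obtain ⟨u₀, hu₀K, hmin⟩ := hKcompact.exists_isMinOn hKne hgcont.continuousOn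
    have hu₀ne : u₀ ≠ 0 := by
      intro h
      have := hu₀K.2
      rw [h] at this
      simp [ip] at this
    refine ⟨g u₀, hgpos u₀ hu₀K.1 hu₀ne, ?_⟩
    exact key (g u₀) (hgpos u₀ hu₀K.1 hu₀ne) (fun u huK => hmin huK)
  · refine ⟨1, one_pos, ?_⟩
    refine key 1 one_pos ?_
    intro u huK
    exact absurd ⟨u, huK⟩ hKne

end
end

section
/- Let S₀ ⊆ ℝⁿ_{≥0} be a nonempty finite set, P := conv(S₀) + ℝⁿ_{≥0}, and for u ∈ ℝⁿ_{≥0} let N(u) := inf{⟨u, w⟩ : w ∈ P}. Fix W ∈ P with all coordinates strictly positive, and for δ > 0 set N_{≤δ} := {u ∈ ℝⁿ_{≥0} : ⟨u, W⟩ − N(u) ≤ δ⟨u, 𝟙⟩}, where 𝟙 = (1,…,1). Then there exists δ₀ > 0 such that for all δ with 0 < δ < δ₀ and all nonzero u ∈ N_{≤δ}, one has N(u) > 0. -/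
open scoped Pointwise

noncomputable section

/-- If `W ∈ P` has strictly positive coordinates, then `N(u) > 0` for all
nonzero `u` in the polyhedral neighborhood `N_{M,≤δ}`, for `δ` small enough. -/
theorem N_pos_on_neighborhood {n : ℕ}
    (S₀ : Finset (Fin n → ℝ)) (hS₀ : S₀.Nonempty)
    (hS₀nn : ∀ v ∈ S₀, ∀ i, 0 ≤ v i)
    (P : Set (Fin n → ℝ)) (hP : P = convexHull ℝ (S₀ : Set (Fin n → ℝ)) + orthant n)
    (N : (Fin n → ℝ) → ℝ) (hN : ∀ u, N u = sInf ((fun w => ip u w) '' P))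
    (W : Fin n → ℝ) (hW : W ∈ P) (hWpos : ∀ i, 0 < W i)
    (Nle : ℝ → Set (Fin n → ℝ))
    (hNle : ∀ δ, Nle δ = {u ∈ orthant n | ip u W - N u ≤ δ * ip u (allOnes n)}) :
    ∃ δ₀ > (0 : ℝ), ∀ δ : ℝ, 0 < δ → δ < δ₀ →
      ∀ u ∈ Nle δ, u ≠ 0 → 0 < N u := by
  rcases Nat.eq_zero_or_pos n with hn | hn
  · subst hn
    exact ⟨1, one_pos, fun δ _ _ u _ hu0 => absurd (funext fun i => i.elim0) hu0⟩
  · have hne : Nonempty (Fin n) := ⟨⟨0, hn⟩⟩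
    set m := Finset.univ.inf' Finset.univ_nonempty W with hm
    have hmpos : 0 < m := (Finset.lt_inf'_iff _).2 fun i _ => hWpos i
    refine ⟨m, hmpos, fun δ hδ hδm u hu hu0 => ?_⟩
    rw [hNle] at hu
    obtain ⟨huo, hle⟩ := hu
    have hsum : 0 < ∑ i, u i := by
      obtain ⟨i, hi⟩ : ∃ i, u i ≠ 0 := by
        by_contra h; push_neg at h; exact hu0 (funext h)
      exact Finset.sum_pos' (fun j _ => huo j)
        ⟨i, Finset.mem_univ i, lt_of_le_of_ne (huo i) (Ne.symm hi)⟩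
    have h1 : ip u (allOnes n) = ∑ i, u i := by simp [ip, allOnes]
    have h2 : m * ∑ i, u i ≤ ip u W := by
      rw [Finset.mul_sum, ip]
      refine Finset.sum_le_sum fun i _ => ?_
      rw [mul_comm]
      exact mul_le_mul_of_nonneg_left (Finset.inf'_le _ (Finset.mem_univ i)) (huo i)
    rw [h1] at hle
    nlinarith

end
end

section
/- Let S₀ ⊆ ℝⁿ_{≥0} be a nonempty finite set, P := conv(S₀) + ℝⁿ_{≥0}, and for u ∈ ℝⁿ_{≥0} let N(u) := inf{⟨u, w⟩ : w ∈ P}. Fix W ∈ P and set σ := {u ∈ ℝⁿ_{≥0} : ⟨u, W⟩ = N(u)}; for δ > 0 set N_{≤δ} := {u ∈ ℝⁿ_{≥0} : ⟨u, W⟩ − N(u) ≤ δ⟨u, 𝟙⟩} and N_{δ} := {u ∈ ℝⁿ_{≥0} : ⟨u, W⟩ − N(u) = δ⟨u, 𝟙⟩}, where 𝟙 = (1,…,1). Let C ⊆ ℝⁿ_{≥0} be a polyhedral cone (the conical hull of a finite set) and suppose there is V₀ ∈ P with N(u) = ⟨u, V₀⟩ for all u ∈ C. Assume C ∩ σ ≠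 {0} and C ⊄ σ. Then there exists δ₀ > 0 such that for all δ with 0 < δ < δ₀: dim(C ∩ N_{≤δ}) = dim C and dim(C ∩ N_{δ}) = dim C − 1, where the dimension of a set containing 0 is the dimension of its linear span; moreover C ∩ N_δ is a proper exposed face of the cone C ∩ N_{≤δ} that is not contained in any proper exposed face of C, and every other proper exposed face of C ∩ N_{≤δ} is contained in some proper exposed face of C. -/
/-! On `C` the map `u ↦ ⟨u, W⟩ - N(u) - δ⟨u, 𝟙⟩` is the linear functional
`φ = ⟨·, W - V₀ - δ𝟙⟩`. It is negative at a nonzero `u₀ ∈ C ∩ σ` for every `δ > 0`, and positive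
at `u₁ ∈ C \ σ` as soon as `δ < (⟨u₁, W⟩ - N(u₁)) / ⟨u₁, 𝟙⟩`. Hence `C ∩ N_{≤δ}` and `C ∩ N_δ`
are the parts of `C` in the half-space `φ ≤ 0` and in the hyperplane `φ = 0`, and everything
reduces to a finitely generated cone cut by a functional taking both signs on it.

Every point of `C` can be slid along `u₀` or `u₁` into the hyperplane. Hence
`span C = span (C ∩ {φ = 0}) ⊕ ℝ u₀`, which gives both dimensions; and since sliding does not
increase a functional that is `≤ 0` on `C`, the slice lies in no proper exposed face of `C`.
Conversely, a functional `ψ ≤ 0` on `C ∩ {φ ≤ 0}` exposing a face other than the slice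
is tilted, Farkas-style, to `ψ - μφ` with `μ ≥ 0` read off from the generators of `C`; the tilt
is `≤ 0` on all of `C` and exposes a proper face of `C` containing the given one. (A functional
positive somewhere on a cone exposes the empty face.) -/

open scoped Pointwise

noncomputable section

/-- `F` is an exposed face of the convex set `K`: the set of points of `K`
maximizing some linear functional. -/
def IsExpFace {n : ℕ} (K F : Set (Fin n → ℝ)) : Prop :=
  ∃ u : Fin n → ℝ, F = {x ∈ K | ∀ y ∈ K, ip y u ≤ ip x u}

/-- The dimension of a set containing `0`: the dimension of its linear span. -/
def sdim {n : ℕ} (S : Set (Fin n → ℝ)) : ℕ :=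
  Module.finrank ℝ ↥(Submodule.span ℝ S)

open Module Submodule PointedCone

section ExposedFace

variable {E : Type*} [AddCommGroup E] [Module ℝ E]

/-- The algebraic counterpart of `ContinuousLinearMap.toExposed`, for functionals in `Dual ℝ E`. -/
def exposedFace (ψ : Dual ℝ E) (K : Set E) : Set E :=
  {x ∈ K | ∀ y ∈ K, ψ y ≤ ψ x}

variable {ψ : Dual ℝ E} {K : Set E}

lemma exposedFace_eq_sep_eq_zero (h0 : 0 ∈ K) (hψ : ∀ y ∈ K, ψ y ≤ 0) :
    exposedFace ψ K = {x ∈ K | ψ x = 0} := by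
  ext x
  refine ⟨fun ⟨hx, hmax⟩ => ⟨hx, le_antisymm (hψ x hx) ?_⟩,
    fun ⟨hx, hx0⟩ => ⟨hx, fun y hy => hx0 ▸ hψ y hy⟩⟩
  simpa using hmax 0 h0

lemma exposedFace_ne_self {c d : E} (hc : c ∈ K) (hd : d ∈ K) (h : ψ c < ψ d) :
    exposedFace ψ K ≠ K := fun heq =>
  (h.trans_le ((heq.symm ▸ hc : c ∈ exposedFace ψ K).2 d hd)).false

lemma exposedFace_eq_empty (hK : ∀ t : ℝ, 0 ≤ t → ∀ x ∈ K, t • x ∈ K) {y : E} (hy : y ∈ K)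
    (hψy : 0 < ψ y) : exposedFace ψ K = ∅ := by
  refine Set.eq_empty_of_forall_notMem fun x ⟨_, hmax⟩ => ?_
  have := hmax (((|ψ x| + 1) / ψ y) • y) (hK _ (by positivity) y hy)
  rw [map_smul, smul_eq_mul, div_mul_cancel₀ _ hψy.ne'] at this
  linarith [le_abs_self (ψ x)]

end ExposedFace

section Slice

variable {E : Type*} [AddCommGroup E] [Module ℝ E] {C : PointedCone ℝ E} {φ : Dual ℝ E}
  {u₀ u₁ : E}

lemma exists_nonneg_add_smul_eq_zero {x u : E} (hu : φ u < 0) (hx : 0 ≤ φ x) :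
    ∃ t : ℝ, 0 ≤ t ∧ φ (x + t • u) = 0 := by
  refine ⟨φ x / -φ u, div_nonneg hx (neg_nonneg.mpr hu.le), ?_⟩
  have hu' : φ u ≠ 0 := hu.ne
  rw [map_add, map_smul, smul_eq_mul]
  field_simp
  ring

lemma exists_add_smul_mem_slice (hu₀ : u₀ ∈ C) (hu₁ : u₁ ∈ C) (h₀ : φ u₀ < 0) (h₁ : 0 < φ u₁)
    {x : E} (hx : x ∈ C) :
    ∃ u ∈ ({u₀, u₁} : Set E), ∃ t : ℝ, 0 ≤ t ∧ x + t • u ∈ {y ∈ C | φ y = 0} := by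
  rcases le_total 0 (φ x) with hφx | hφx
  · obtain ⟨t, ht, h⟩ := exists_nonneg_add_smul_eq_zero h₀ hφx
    exact ⟨u₀, .inl rfl, t, ht, C.add_mem hx (C.smul_mem ht hu₀), h⟩
  · obtain ⟨t, ht, h⟩ := exists_nonneg_add_smul_eq_zero (φ := -φ) (x := x) (u := u₁)
      (by simpa using h₁) (by simpa using hφx)
    rw [LinearMap.neg_apply, neg_eq_zero] at h
    exact ⟨u₁, .inr rfl, t, ht, C.add_mem hx (C.smul_mem ht hu₁), h⟩

lemma span_le_span_slice_sup (hu₀ : u₀ ∈ C) (hu₁ : u₁ ∈ C) (h₀ : φ u₀ < 0) (h₁ : 0 < φ u₁) :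
    span ℝ (C : Set E) ≤ span ℝ {x ∈ C | φ x = 0} ⊔ ℝ ∙ u₀ := by
  set V := span ℝ {x ∈ C | φ x = 0} ⊔ ℝ ∙ u₀
  have hu₀V : u₀ ∈ V := mem_sup_right (mem_span_singleton_self u₀)
  have hslice {x : E} (hx : x ∈ {x ∈ C | φ x = 0}) : x ∈ V := mem_sup_left (subset_span hx)
  have hu₁V : u₁ ∈ V := by
    obtain ⟨t, ht, h⟩ := exists_nonneg_add_smul_eq_zero h₀ h₁.le
    simpa using V.sub_mem (hslice ⟨C.add_mem hu₁ (C.smul_mem ht hu₀), h⟩) (V.smul_mem t hu₀V)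
  refine span_le.mpr fun x hx => ?_
  obtain ⟨u, hu, t, -, hxt⟩ := exists_add_smul_mem_slice hu₀ hu₁ h₀ h₁ hx
  have huV : u ∈ V := by rcases hu with rfl | rfl <;> assumption
  simpa using V.sub_mem (hslice hxt) (V.smul_mem t huV)

lemma span_halfspace_eq (hu₀ : u₀ ∈ C) (hu₁ : u₁ ∈ C) (h₀ : φ u₀ < 0) (h₁ : 0 < φ u₁) :
    span ℝ {x ∈ C | φ x ≤ 0} = span ℝ (C : Set E) :=
  le_antisymm (span_mono fun _ hx => hx.1) <| (span_le_span_slice_sup hu₀ hu₁ h₀ h₁).trans <|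
    sup_le (span_mono fun _ hx => ⟨hx.1, hx.2.le⟩)
      ((span_singleton_le_iff_mem _ _).mpr (subset_span ⟨hu₀, h₀.le⟩))

lemma finrank_span_slice_add_one [FiniteDimensional ℝ E] (hu₀ : u₀ ∈ C) (hu₁ : u₁ ∈ C)
    (h₀ : φ u₀ < 0) (h₁ : 0 < φ u₁) :
    finrank ℝ (span ℝ {x ∈ C | φ x = 0}) + 1 = finrank ℝ (span ℝ (C : Set E)) := by
  have hsup : span ℝ {x ∈ C | φ x = 0} ⊔ ℝ ∙ u₀ = span ℝ (C : Set E) :=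
    le_antisymm (sup_le (span_mono fun _ hx => hx.1)
      ((span_singleton_le_iff_mem _ _).mpr (subset_span hu₀)))
      (span_le_span_slice_sup hu₀ hu₁ h₀ h₁)
  have hinf : span ℝ {x ∈ C | φ x = 0} ⊓ ℝ ∙ u₀ = ⊥ := by
    refine eq_bot_iff.mpr fun x ⟨hxS, hxu⟩ => ?_
    obtain ⟨a, rfl⟩ := mem_span_singleton.mp hxu
    have : φ (a • u₀) = 0 := (span_le (p := LinearMap.ker φ)).mpr (fun _ hy => hy.2) hxS
    rw [map_smul, smul_eq_mul, mul_eq_zero] at this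
    simp [this.resolve_right h₀.ne]
  have hu₀ne : u₀ ≠ 0 := by rintro rfl; simp at h₀
  have := finrank_sup_add_finrank_inf_eq (span ℝ {x ∈ C | φ x = 0}) (ℝ ∙ u₀)
  rw [hsup, hinf, finrank_bot, add_zero, finrank_span_singleton hu₀ne] at this
  exact this.symm

lemma exposedFace_halfspace_eq_slice :
    exposedFace φ {x ∈ C | φ x ≤ 0} = {x ∈ C | φ x = 0} := by
  rw [exposedFace_eq_sep_eq_zero (show (0 : E) ∈ {x ∈ C | φ x ≤ 0} from ⟨C.zero_mem, by simp⟩)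
    fun _ hy => hy.2]
  ext x
  exact ⟨fun ⟨⟨hx, _⟩, h⟩ => ⟨hx, h⟩, fun ⟨hx, h⟩ => ⟨⟨hx, h.le⟩, h⟩⟩

lemma slice_not_subset_exposedFace (hu₀ : u₀ ∈ C) (hu₁ : u₁ ∈ C) (h₀ : φ u₀ < 0)
    (h₁ : 0 < φ u₁) {ψ : Dual ℝ E} (hne : exposedFace ψ C ≠ C) :
    ¬ {x ∈ C | φ x = 0} ⊆ exposedFace ψ C := by
  intro hsub
  have hψ : ∀ y ∈ C, ψ y ≤ 0 := by simpa using (hsub ⟨C.zero_mem, map_zero φ⟩).2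
  rw [exposedFace_eq_sep_eq_zero C.zero_mem hψ] at hsub hne
  obtain ⟨c, hc, hψc⟩ : ∃ c ∈ C, ψ c ≠ 0 := by
    by_contra! h
    exact hne (Set.ext fun x => ⟨fun hx => hx.1, fun hx => ⟨hx, h x hx⟩⟩)
  obtain ⟨u, hu, t, ht, he⟩ := exists_add_smul_mem_slice hu₀ hu₁ h₀ h₁ hc
  have huC : u ∈ C := by rcases hu with rfl | rfl <;> assumption
  have hψe := (hsub he).2
  rw [map_add, map_smul, smul_eq_mul] at hψe
  linarith [(hψ c hc).lt_of_ne hψc, mul_nonpos_of_nonneg_of_nonpos ht (hψ u huC)]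

lemma nonpos_of_mem_hull {s : Set E} {ψ : Dual ℝ E} (h : ∀ g ∈ s, ψ g ≤ 0) {x : E}
    (hx : x ∈ hull ℝ s) : ψ x ≤ 0 := by
  induction hx using Submodule.span_induction with
  | mem g hg => exact h g hg
  | zero => simp
  | add x y _ _ hx hy => rw [map_add]; linarith
  | smul c x _ hx =>
    rw [← Nonneg.coe_smul, map_smul, smul_eq_mul]
    exact mul_nonpos_of_nonneg_of_nonpos c.2 hx

lemma exists_sub_smul_nonpos_of_fg (hC : C.FG) (hu₀ : u₀ ∈ C) (h₀ : φ u₀ < 0) {ψ : Dual ℝ E}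
    (hψ : ∀ x ∈ C, φ x ≤ 0 → ψ x ≤ 0) : ∃ μ : ℝ, 0 ≤ μ ∧ ∀ x ∈ C, (ψ - μ • φ) x ≤ 0 := by
  -- `μ` is the least ratio `ψ g / φ g` over the generators `g` with `φ g < 0`. A generator with
  -- `φ g > 0` is combined with the minimizing one into a point of `C ∩ {φ = 0}`, where `ψ ≤ 0`.
  obtain ⟨G, rfl⟩ := hC
  set C := hull ℝ (G : Set E)
  have hG : ∀ g ∈ G, g ∈ C := fun g hg => subset_hull hg
  set G' := G.filter (fun g => φ g < 0)
  have hG' : G'.Nonempty := by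
    by_contra h
    rw [Finset.not_nonempty_iff_eq_empty, Finset.filter_eq_empty_iff] at h
    have := nonpos_of_mem_hull (ψ := -φ) (fun g hg => by simpa using h hg) hu₀
    simp only [LinearMap.neg_apply, Left.neg_nonpos_iff] at this
    linarith
  obtain ⟨h, hhG', hμ⟩ := Finset.exists_mem_eq_inf' hG' (fun g => ψ g / φ g)
  set μ := G'.inf' hG' (fun g => ψ g / φ g)
  obtain ⟨hhG, hφh⟩ := Finset.mem_filter.mp hhG'
  have hψh : ψ h = μ * φ h := by rw [hμ]; field_simp [hφh.ne]
  refine ⟨μ, hμ ▸ div_nonneg_of_nonpos (hψ h (hG h hhG) hφh.le) hφh.le,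
    fun x hx => nonpos_of_mem_hull (fun g hg => ?_) hx⟩
  rw [LinearMap.sub_apply, LinearMap.smul_apply, smul_eq_mul, sub_nonpos]
  rcases lt_trichotomy (φ g) 0 with hφg | hφg | hφg
  · exact (le_div_iff_of_neg hφg).mp (Finset.inf'_le _ (Finset.mem_filter.mpr ⟨hg, hφg⟩))
  · simpa [hφg] using hψ g (hG g hg) hφg.le
  · have hcomb := hψ ((-φ h) • g + φ g • h)
      (add_mem (C.smul_mem (by linarith) (hG g hg)) (C.smul_mem hφg.le (hG h hhG)))
      (le_of_eq (by simp only [map_add, map_smul, smul_eq_mul]; ring))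
    simp only [map_add, map_smul, smul_eq_mul, hψh] at hcomb
    nlinarith

lemma exists_exposedFace_superset (hC : C.FG) (hu₀ : u₀ ∈ C) (hu₁ : u₁ ∈ C) (h₀ : φ u₀ < 0)
    (h₁ : 0 < φ u₁) {ψ : Dual ℝ E}
    (hne : exposedFace ψ {x ∈ C | φ x ≤ 0} ≠ {x ∈ C | φ x ≤ 0})
    (hne' : exposedFace ψ {x ∈ C | φ x ≤ 0} ≠ {x ∈ C | φ x = 0}) :
    ∃ ψ' : Dual ℝ E, exposedFace ψ' C ≠ C ∧
      exposedFace ψ {x ∈ C | φ x ≤ 0} ⊆ exposedFace ψ' C := by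
  set K := {x ∈ C | φ x ≤ 0}
  have h0K : (0 : E) ∈ K := ⟨C.zero_mem, by simp⟩
  by_cases hpos : ∃ y ∈ K, 0 < ψ y
  · obtain ⟨y, hy, hψy⟩ := hpos
    have hK (t : ℝ) (ht : 0 ≤ t) (x : E) (hx : x ∈ K) : t • x ∈ K :=
      ⟨C.smul_mem ht hx.1, by simpa using mul_nonpos_of_nonneg_of_nonpos ht hx.2⟩
    refine ⟨φ, exposedFace_ne_self C.zero_mem hu₁ (by simpa using h₁), ?_⟩
    rw [exposedFace_eq_empty hK hy hψy]
    exact Set.empty_subset _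
  simp only [not_exists, not_and, not_lt] at hpos
  obtain ⟨μ, hμ, hψ'⟩ := exists_sub_smul_nonpos_of_fg hC hu₀ h₀ (fun x hx hφx => hpos x ⟨hx, hφx⟩)
  rw [exposedFace_eq_sep_eq_zero h0K hpos] at hne hne' ⊢
  have hface : {x ∈ K | ψ x = 0} ⊆ exposedFace (ψ - μ • φ) C := by
    rintro x ⟨⟨hxC, hφx⟩, hψx⟩
    refine ⟨hxC, fun y hy => (hψ' y hy).trans ?_⟩
    simp only [LinearMap.sub_apply, LinearMap.smul_apply, smul_eq_mul, hψx]
    nlinarith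
  refine ⟨ψ - μ • φ, ?_, hface⟩
  -- If the face leaves the slice, it contains a point with `φ < 0`, which forces `μ = 0`.
  obtain ⟨c, hcK, hψc⟩ : ∃ c ∈ K, μ * φ c = 0 ∧ ψ c ≠ 0 := by
    by_cases hS : {x ∈ K | ψ x = 0} ⊆ {x ∈ C | φ x = 0}
    · obtain ⟨e, ⟨heC, hφe⟩, he⟩ := Set.exists_of_ssubset (hS.ssubset_of_ne hne')
      exact ⟨e, ⟨heC, hφe.le⟩, by simp [hφe], fun h => he ⟨⟨heC, hφe.le⟩, h⟩⟩
    · obtain ⟨x₁, hx₁, hφx₁⟩ := Set.not_subset.mp hS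
      obtain ⟨k, hk, hkF⟩ := Set.exists_of_ssubset ((Set.sep_subset _ _).ssubset_of_ne hne)
      have hμφ : μ * φ x₁ = 0 := by
        have := hψ' x₁ hx₁.1.1
        simp only [LinearMap.sub_apply, LinearMap.smul_apply, smul_eq_mul, hx₁.2] at this
        nlinarith [mul_nonpos_of_nonneg_of_nonpos hμ hx₁.1.2]
      have hμ0 : μ = 0 := (mul_eq_zero.mp hμφ).resolve_right fun h => hφx₁ ⟨hx₁.1.1, h⟩
      exact ⟨k, hk, by simp [hμ0], fun h => hkF ⟨hk, h⟩⟩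
  exact exposedFace_ne_self hcK.1 C.zero_mem (by simpa [hψc.1] using (hpos c hcK).lt_of_ne hψc.2)

end Slice

lemma ip_eq_dotProduct {n : ℕ} (u w : Fin n → ℝ) : ip u w = u ⬝ᵥ w := rfl

lemma isExpFace_iff {n : ℕ} {K F : Set (Fin n → ℝ)} :
    IsExpFace K F ↔ ∃ ψ : Dual ℝ (Fin n → ℝ), F = exposedFace ψ K := by
  rw [(dotProductEquiv ℝ (Fin n)).surjective.exists]
  simp only [IsExpFace, exposedFace, ip_eq_dotProduct, dotProductEquiv_apply_apply,
    dotProduct_comm]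

theorem cone_slice_structure {n : ℕ} {C : PointedCone ℝ (Fin n → ℝ)} (hC : C.FG)
    {φ : Dual ℝ (Fin n → ℝ)} {u₀ u₁ : Fin n → ℝ} (hu₀ : u₀ ∈ C) (hu₁ : u₁ ∈ C) (h₀ : φ u₀ < 0)
    (h₁ : 0 < φ u₁) :
    sdim {x ∈ C | φ x ≤ 0} = sdim (C : Set (Fin n → ℝ)) ∧
      sdim {x ∈ C | φ x = 0} = sdim (C : Set (Fin n → ℝ)) - 1 ∧
      (IsExpFace {x ∈ C | φ x ≤ 0} {x ∈ C | φ x = 0} ∧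
        {x ∈ C | φ x = 0} ≠ {x ∈ C | φ x ≤ 0}) ∧
      (∀ F, IsExpFace C F → F ≠ C → ¬ {x ∈ C | φ x = 0} ⊆ F) ∧
      (∀ F', IsExpFace {x ∈ C | φ x ≤ 0} F' → F' ≠ {x ∈ C | φ x ≤ 0} →
        F' ≠ {x ∈ C | φ x = 0} → ∃ F, IsExpFace C F ∧ F ≠ C ∧ F' ⊆ F) := by
  refine ⟨by unfold sdim; rw [span_halfspace_eq hu₀ hu₁ h₀ h₁], ?_,
    ⟨isExpFace_iff.mpr ⟨φ, exposedFace_halfspace_eq_slice.symm⟩, fun h => ?_⟩, ?_, ?_⟩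
  · have := finrank_span_slice_add_one hu₀ hu₁ h₀ h₁
    unfold sdim
    omega
  · exact h₀.ne ((h ▸ ⟨hu₀, h₀.le⟩ : u₀ ∈ {x ∈ C | φ x = 0}).2)
  · rintro F hF hne
    obtain ⟨ψ, rfl⟩ := isExpFace_iff.mp hF
    exact slice_not_subset_exposedFace hu₀ hu₁ h₀ h₁ hne
  · rintro F' hF' hne hne'
    obtain ⟨ψ, rfl⟩ := isExpFace_iff.mp hF'
    obtain ⟨ψ', hψ', hsub⟩ := exists_exposedFace_superset hC hu₀ hu₁ h₀ h₁ hne hne'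
    exact ⟨_, isExpFace_iff.mpr ⟨ψ', rfl⟩, hψ', hsub⟩

lemma coe_hull_finset {E : Type*} [AddCommGroup E] [Module ℝ E] (G : Finset E) :
    (hull ℝ (G : Set E) : Set E) =
      {x | ∃ lam : E → ℝ, (∀ v ∈ G, 0 ≤ lam v) ∧ x = ∑ v ∈ G, lam v • v} := by
  ext x
  constructor
  · intro hx
    obtain ⟨f, -, rfl⟩ := mem_span_finset.mp hx
    exact ⟨fun v => f v, fun v _ => (f v).2, rfl⟩
  · rintro ⟨lam, hlam, rfl⟩
    exact sum_mem fun v hv => PointedCone.smul_mem _ (hlam v hv) (subset_hull hv)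

lemma sInf_image_ip_zero {n : ℕ} {P : Set (Fin n → ℝ)} (hP : P.Nonempty) :
    sInf ((fun w => ip 0 w) '' P) = 0 := by
  simp only [ip_eq_dotProduct, zero_dotProduct]
  rw [hP.image_const, csInf_singleton]

lemma csInf_ip_image_le {n : ℕ} (S₀ : Finset (Fin n → ℝ)) {u p : Fin n → ℝ}
    (hu : u ∈ orthant n) (hp : p ∈ convexHull ℝ (S₀ : Set (Fin n → ℝ)) + orthant n) :
    sInf ((fun w => ip u w) '' (convexHull ℝ (S₀ : Set (Fin n → ℝ)) + orthant n)) ≤ ip u p := by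
  refine csInf_le ?_ ⟨p, hp, rfl⟩
  obtain ⟨m, hm⟩ := ((S₀.finite_toSet.isCompact_convexHull ℝ).image
    (show Continuous (fun w => u ⬝ᵥ w) by fun_prop)).bddBelow
  refine ⟨m, ?_⟩
  rintro _ ⟨_, ⟨c, hc, o, ho, rfl⟩, rfl⟩
  have hco : 0 ≤ u ⬝ᵥ o := Finset.sum_nonneg fun i _ => mul_nonneg (hu i) (ho i)
  simp only [ip_eq_dotProduct, dotProduct_add]
  linarith [hm ⟨c, hc, rfl⟩]

lemma ip_allOnes_pos {n : ℕ} {u : Fin n → ℝ} (hu : u ∈ orthant n) (h : u ≠ 0) :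
    0 < ip u (allOnes n) := by
  obtain ⟨i, hi⟩ := Function.ne_iff.mp h
  exact Finset.sum_pos' (fun j _ => by simpa [allOnes] using hu j)
    ⟨i, Finset.mem_univ i, by simpa [allOnes] using (hu i).lt_of_ne' hi⟩

lemma Set.inter_sep_eq_sep_of_subset {α : Type*} {C s : Set α} {p q : α → Prop} (hC : C ⊆ s)
    (h : ∀ x ∈ C, p x ↔ q x) : C ∩ {x ∈ s | p x} = {x ∈ C | q x} :=
  Set.ext fun x => ⟨fun ⟨hx, _, hp⟩ => ⟨hx, (h x hx).mp hp⟩,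
    fun ⟨hx, hq⟩ => ⟨hx, hC hx, (h x hx).mpr hq⟩⟩

theorem cone_inter_neighborhood_structure_general {n : ℕ}
    (S₀ : Finset (Fin n → ℝ))
    (P : Set (Fin n → ℝ)) (hP : P = convexHull ℝ (S₀ : Set (Fin n → ℝ)) + orthant n)
    (N : (Fin n → ℝ) → ℝ) (hN : ∀ u, N u = sInf ((fun w => ip u w) '' P))
    (W : Fin n → ℝ) (hW : W ∈ P)
    (σ : Set (Fin n → ℝ)) (hσ : σ = {u ∈ orthant n | ip u W = N u})
    (Nle Neq : ℝ → Set (Fin n → ℝ))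
    (hNle : ∀ δ, Nle δ = {u ∈ orthant n | ip u W - N u ≤ δ * ip u (allOnes n)})
    (hNeq : ∀ δ, Neq δ = {u ∈ orthant n | ip u W - N u = δ * ip u (allOnes n)})
    (C : Set (Fin n → ℝ)) (hCsub : C ⊆ orthant n)
    (hCgen : ∃ G : Finset (Fin n → ℝ), C = {x | ∃ lam : (Fin n → ℝ) → ℝ,
      (∀ v ∈ G, 0 ≤ lam v) ∧ x = ∑ v ∈ G, lam v • v})
    (V₀ : Fin n → ℝ) (hNC : ∀ u ∈ C, N u = ip u V₀)
    (hCσ : C ∩ σ ≠ {0}) (hCnotsub : ¬ C ⊆ σ) :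
    ∃ δ₀ > (0 : ℝ), ∀ δ : ℝ, 0 < δ → δ < δ₀ →
      (sdim (C ∩ Nle δ) = sdim C) ∧
      (sdim (C ∩ Neq δ) = sdim C - 1) ∧
      (IsExpFace (C ∩ Nle δ) (C ∩ Neq δ) ∧ C ∩ Neq δ ≠ C ∩ Nle δ) ∧
      (∀ F : Set (Fin n → ℝ), IsExpFace C F → F ≠ C → ¬ (C ∩ Neq δ ⊆ F)) ∧
      (∀ F' : Set (Fin n → ℝ), IsExpFace (C ∩ Nle δ) F' → F' ≠ C ∩ Nle δ →
        F' ≠ C ∩ Neq δ → ∃ F : Set (Fin n → ℝ), IsExpFace C F ∧ F ≠ C ∧ F' ⊆ F) := by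
  obtain ⟨G, hG⟩ := hCgen
  rw [← coe_hull_finset] at hG
  subst hG hP hσ
  set C := hull ℝ (G : Set (Fin n → ℝ))
  have h0σ : (0 : Fin n → ℝ) ∈ {u ∈ orthant n | ip u W = N u} :=
    ⟨fun _ => le_rfl, by rw [hN, sInf_image_ip_zero ⟨W, hW⟩, ip_eq_dotProduct, zero_dotProduct]⟩
  obtain ⟨u₀, ⟨hu₀C, -, hu₀σ⟩, hu₀⟩ : ∃ u ∈ ↑C ∩ {u ∈ orthant n | ip u W = N u}, u ≠ 0 := by
    by_contra! h
    exact hCσ (Set.eq_singleton_iff_unique_mem.mpr ⟨⟨C.zero_mem, h0σ⟩, h⟩)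
  obtain ⟨u₁, hu₁C, hu₁σ⟩ := Set.not_subset.mp hCnotsub
  have hgap : 0 < ip u₁ W - N u₁ :=
    (sub_nonneg.mpr (hN u₁ ▸ csInf_ip_image_le S₀ (hCsub hu₁C) hW)).lt_of_ne
      fun h => hu₁σ ⟨hCsub hu₁C, by linarith⟩
  have hu₁ : 0 < ip u₁ (allOnes n) := ip_allOnes_pos (hCsub hu₁C) fun h => hu₁σ (h ▸ h0σ)
  refine ⟨(ip u₁ W - N u₁) / ip u₁ (allOnes n), by positivity, fun δ hδ hδ₀ => ?_⟩
  set φ := dotProductEquiv ℝ (Fin n) (W - V₀ - δ • allOnes n)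
  have hφ (u) (hu : u ∈ C) : φ u = ip u W - N u - δ * ip u (allOnes n) := by
    simp only [φ, dotProductEquiv_apply_apply, hNC u hu, ip_eq_dotProduct, sub_dotProduct,
      smul_dotProduct, smul_eq_mul, dotProduct_comm u]
  rw [hNle, hNeq, Set.inter_sep_eq_sep_of_subset (q := fun x => φ x ≤ 0) hCsub
      fun x hx => by rw [hφ x hx, sub_nonpos],
    Set.inter_sep_eq_sep_of_subset (q := fun x => φ x = 0) hCsub
      fun x hx => by rw [hφ x hx, sub_eq_zero]]
  refine cone_slice_structure ⟨G, rfl⟩ hu₀C hu₁C ?_ ?_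
  · rw [hφ u₀ hu₀C, ← hu₀σ]
    nlinarith [ip_allOnes_pos (hCsub hu₀C) hu₀]
  · rw [hφ u₁ hu₁C]
    linarith [(lt_div_iff₀ hu₁).mp hδ₀]

/-- Structure of the intersection of a cone of a refining fan with the
polyhedral neighborhoods `N_{M,≤δ}` and `N_{M,δ}` for small `δ`. -/
theorem cone_inter_neighborhood_structure {n : ℕ}
    (S₀ : Finset (Fin n → ℝ)) (hS₀ : S₀.Nonempty)
    (hS₀nn : ∀ v ∈ S₀, ∀ i, 0 ≤ v i)
    (P : Set (Fin n → ℝ)) (hP : P = convexHull ℝ (S₀ : Set (Fin n → ℝ)) + orthant n)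
    (N : (Fin n → ℝ) → ℝ) (hN : ∀ u, N u = sInf ((fun w => ip u w) '' P))
    (W : Fin n → ℝ) (hW : W ∈ P)
    (σ : Set (Fin n → ℝ)) (hσ : σ = {u ∈ orthant n | ip u W = N u})
    (Nle Neq : ℝ → Set (Fin n → ℝ))
    (hNle : ∀ δ, Nle δ = {u ∈ orthant n | ip u W - N u ≤ δ * ip u (allOnes n)})
    (hNeq : ∀ δ, Neq δ = {u ∈ orthant n | ip u W - N u = δ * ip u (allOnes n)})
    (C : Set (Fin n → ℝ)) (hCsub : C ⊆ orthant n)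
    (hCgen : ∃ G : Finset (Fin n → ℝ), C = {x | ∃ lam : (Fin n → ℝ) → ℝ,
      (∀ v ∈ G, 0 ≤ lam v) ∧ x = ∑ v ∈ G, lam v • v})
    (V₀ : Fin n → ℝ) (hV₀ : V₀ ∈ P) (hNC : ∀ u ∈ C, N u = ip u V₀)
    (hCσ : C ∩ σ ≠ {0}) (hCnotsub : ¬ C ⊆ σ) :
    ∃ δ₀ > (0 : ℝ), ∀ δ : ℝ, 0 < δ → δ < δ₀ →
      (sdim (C ∩ Nle δ) = sdim C) ∧
      (sdim (C ∩ Neq δ) = sdim C - 1) ∧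
      (IsExpFace (C ∩ Nle δ) (C ∩ Neq δ) ∧ C ∩ Neq δ ≠ C ∩ Nle δ) ∧
      (∀ F : Set (Fin n → ℝ), IsExpFace C F → F ≠ C → ¬ (C ∩ Neq δ ⊆ F)) ∧
      (∀ F' : Set (Fin n → ℝ), IsExpFace (C ∩ Nle δ) F' → F' ≠ C ∩ Nle δ →
        F' ≠ C ∩ Neq δ → ∃ F : Set (Fin n → ℝ), IsExpFace C F ∧ F ≠ C ∧ F' ⊆ F) :=
  cone_inter_neighborhood_structure_general S₀ P hP N hN W hW σ hσ Nle Neq hNle hNeq C hCsub hCgen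
    V₀ hNC hCσ hCnotsub
end
end

section
/- Let A := ℤ[L, L^{−1}] be the ring of Laurent polynomials over ℤ in one variable L, and let R := A⟦T⟧ be the ring of formal power series over A. For a finite set 𝒫 ⊆ ℚ with −1 ∈ 𝒫, let D_𝒫 ⊆ R be the subring generated by A (as constants), the element T, and the inverses (1 − L^a T^b)^{−1} for all pairs (a, b) ∈ ℤ × ℤ_{>0} with a/b ∈ 𝒫 (these elements are invertible in R since their constant term is 1 ∈ A). Let 𝒫₁, 𝒫₂ ⊆ ℚ be finite sets, each containing −1. If z ∈ R lies in both D_{𝒫₁} and D_{𝒫₂}, then z ∈ D_{𝒫₁ ∩ 𝒫₂}. -/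
/-!
Every element of `D_𝒫` is a quotient `q / ∏ (1 - L^a T^b)` of a polynomial by binomials with
`a/b ∈ 𝒫`, and every such quotient lies in `D_𝒫`. Given such representations of `z` for `𝒫₁`
and `𝒫₂`, the binomials of the first whose slope is not in `𝒫₂` are coprime over
`Frac ℤ[L,L⁻¹]` to all binomials of the second, since binomials of different slopes have no
common root. Hence they divide the first numerator; as their leading coefficients are units,
they already do so over `ℤ[L,L⁻¹]`, and cancelling them leaves a representation for `𝒫₁ ∩ 𝒫₂`.
-/

noncomputable section

/-- The subring `D_𝒫` of `ℤ[L,L⁻¹]⟦T⟧` generated by the Laurent-polynomial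
constants, the variable `T`, and the inverses `(1 − L^a T^b)⁻¹` for
`(a, b) ∈ ℤ × ℤ_{>0}` with `a/b ∈ 𝒫`. -/
def candidatePoleRing (P : Set ℚ) : Subring (PowerSeries (LaurentPolynomial ℤ)) :=
  Subring.closure
    (Set.range ((PowerSeries.C : LaurentPolynomial ℤ →+* PowerSeries (LaurentPolynomial ℤ))) ∪ {PowerSeries.X} ∪
      {z | ∃ (a : ℤ) (b : ℕ), 0 < b ∧ ((a : ℚ) / (b : ℚ)) ∈ P ∧
        z = PowerSeries.invOfUnit
          (1 - (PowerSeries.C : LaurentPolynomial ℤ →+* PowerSeries (LaurentPolynomial ℤ)) (LaurentPolynomial.T a) *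
            PowerSeries.X ^ b) 1})

open Polynomial
open scoped PowerSeries LaurentPolynomial

namespace Polynomial

section Field

variable {K : Type*} [Field K]

theorem isCoprime_one_sub_C_mul_of_ne {α β : K} (h : α ≠ β) (y : K[X]) :
    IsCoprime (1 - C α * y) (1 - C β * y) := by
  have hβα : β - α ≠ 0 := sub_ne_zero.2 h.symm
  -- `β (1 - α y) - α (1 - β y) = β - α`
  refine ⟨C (β / (β - α)), -C (α / (β - α)), ?_⟩
  have hconst : C (β / (β - α)) - C (α / (β - α)) = (1 : K[X]) := by
    rw [← C_sub, ← sub_div, div_self hβα, C_1]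
  have hlin : C (β / (β - α)) * C α = C (α / (β - α)) * C β := by
    rw [← C_mul, ← C_mul, div_mul_eq_mul_div, div_mul_eq_mul_div, mul_comm]
  linear_combination hconst - y * hlin

theorem isCoprime_one_sub_C_mul_X_pow {c c' : K} {b b' : ℕ}
    (h : c ^ b' ≠ c' ^ b) : IsCoprime (1 - C c * X ^ b) (1 - C c' * X ^ b') := by
  have hdvd : 1 - C c * X ^ b ∣ 1 - C (c ^ b') * X ^ (b * b') := by
    rw [C_pow, pow_mul, ← mul_pow]
    exact one_sub_dvd_one_sub_pow _ _
  have hdvd' : 1 - C c' * X ^ b' ∣ 1 - C (c' ^ b) * X ^ (b * b') := by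
    rw [C_pow, pow_mul', ← mul_pow]
    exact one_sub_dvd_one_sub_pow _ _
  exact ((isCoprime_one_sub_C_mul_of_ne h _).of_isCoprime_of_dvd_left hdvd)
    |>.of_isCoprime_of_dvd_right hdvd'

end Field

theorem dvd_of_map_dvd_map_of_isUnit_leadingCoeff {R A : Type*} [CommRing R]
    [CommRing A] (f : R →+* A) (hf : Function.Injective f) {p q : R[X]}
    (hp : IsUnit p.leadingCoeff) (h : p.map f ∣ q.map f) : p ∣ q := by
  have hmonic : (C (↑hp.unit⁻¹ : R) * p).Monic :=
    monic_C_mul_of_mul_leadingCoeff_eq_one (by simp)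
  rw [← (isUnit_C.2 hp.unit⁻¹.isUnit).mul_left_dvd, ← map_dvd_map f hf hmonic,
    Polynomial.map_mul, map_C]
  exact (isUnit_C.2 (hp.unit⁻¹.isUnit.map f)).mul_left_dvd.2 h

theorem isUnit_leadingCoeff_one_sub_C_mul_X_pow {R : Type*} [CommRing R]
    [Nontrivial R] {c : R} (hc : IsUnit c) {b : ℕ} (hb : 0 < b) :
    IsUnit (1 - C c * X ^ b).leadingCoeff := by
  have hdeg : degree (1 : R[X]) < degree (C c * X ^ b) := by
    rw [degree_one, degree_C_mul_X_pow b hc.ne_zero]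
    exact_mod_cast hb
  rw [leadingCoeff_sub_of_degree_lt' hdeg, leadingCoeff_C_mul_X_pow]
  exact hc.neg

end Polynomial

theorem LaurentPolynomial.T_injective {R : Type*} [Semiring R] [Nontrivial R] :
    Function.Injective (LaurentPolynomial.T : ℤ → R[T;T⁻¹]) := fun m n h => by
  simpa using congrArg (·.coeff n) h

/-- `1 - L^a T^b` for `p = (a, b)`: the paper's variable `T` is `X` here, and `L` is
`LaurentPolynomial.T`. -/
def binomial (p : ℤ × ℕ) : ℤ[T;T⁻¹][X] := 1 - C (LaurentPolynomial.T p.1) * X ^ p.2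

/-- The pole `s = a/b` of `(1 - L^a T^b)⁻¹` after substituting `T = L^{-s}`. -/
def candidatePole (p : ℤ × ℕ) : ℚ := p.1 / p.2

def binomialProd (M : Multiset (ℤ × ℕ)) : ℤ[T;T⁻¹][X] := (M.map binomial).prod

theorem binomialProd_add (M N : Multiset (ℤ × ℕ)) :
    binomialProd (M + N) = binomialProd M * binomialProd N := by
  simp [binomialProd]

theorem coe_binomial_mul_invOfUnit {p : ℤ × ℕ} (hb : 0 < p.2) :
    (binomial p : ℤ[T;T⁻¹]⟦X⟧) * PowerSeries.invOfUnit (binomial p) 1 = 1 :=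
  PowerSeries.mul_invOfUnit _ _ (by simp [binomial, hb.ne'])

theorem isUnit_leadingCoeff_binomialProd {M : Multiset (ℤ × ℕ)} (hM : ∀ p ∈ M, 0 < p.2) :
    IsUnit (binomialProd M).leadingCoeff := by
  rw [binomialProd, leadingCoeff_multiset_prod, Multiset.map_map]
  refine Multiset.prod_induction _ _ (fun _ _ => IsUnit.mul) isUnit_one ?_
  simp only [Multiset.mem_map, Function.comp_apply]
  rintro _ ⟨p, hp, rfl⟩
  exact isUnit_leadingCoeff_one_sub_C_mul_X_pow (LaurentPolynomial.isUnit_T _) (hM p hp)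

theorem isCoprime_map_binomial {p p' : ℤ × ℕ} (hb : 0 < p.2) (hb' : 0 < p'.2)
    (h : candidatePole p ≠ candidatePole p') :
    IsCoprime ((binomial p).map (algebraMap ℤ[T;T⁻¹] (FractionRing ℤ[T;T⁻¹])))
      ((binomial p').map (algebraMap ℤ[T;T⁻¹] (FractionRing ℤ[T;T⁻¹]))) := by
  obtain ⟨a, b⟩ := p
  obtain ⟨a', b'⟩ := p'
  simp only [binomial, Polynomial.map_sub, Polynomial.map_one, Polynomial.map_mul, map_C,
    Polynomial.map_pow, map_X]
  apply isCoprime_one_sub_C_mul_X_pow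
  rw [← map_pow, ← map_pow, LaurentPolynomial.T_pow, LaurentPolynomial.T_pow,
    (IsFractionRing.injective _ _).ne_iff, LaurentPolynomial.T_injective.ne_iff]
  contrapose! h
  rw [candidatePole, candidatePole,
    div_eq_div_iff (Nat.cast_ne_zero.2 hb.ne') (Nat.cast_ne_zero.2 hb'.ne')]
  exact_mod_cast (by linarith : a * b' = a' * b)

theorem isCoprime_map_binomialProd {M N : Multiset (ℤ × ℕ)} (hM : ∀ p ∈ M, 0 < p.2)
    (hN : ∀ p ∈ N, 0 < p.2) (h : ∀ p ∈ M, ∀ p' ∈ N, candidatePole p ≠ candidatePole p') :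
    IsCoprime ((binomialProd M).map (algebraMap ℤ[T;T⁻¹] (FractionRing ℤ[T;T⁻¹])))
      ((binomialProd N).map (algebraMap ℤ[T;T⁻¹] (FractionRing ℤ[T;T⁻¹]))) := by
  rw [binomialProd, binomialProd, Polynomial.map_multiset_prod, Polynomial.map_multiset_prod]
  refine Multiset.prod_induction (IsCoprime · _) _ (fun _ _ => IsCoprime.mul_left)
    isCoprime_one_left ?_
  simp only [Multiset.map_map, Multiset.mem_map]
  rintro _ ⟨p, hp, rfl⟩
  refine Multiset.prod_induction (IsCoprime _) _ (fun _ _ => IsCoprime.mul_right)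
    isCoprime_one_right ?_
  simp only [Multiset.mem_map]
  rintro _ ⟨p', hp', rfl⟩
  exact isCoprime_map_binomial (hM p hp) (hN p' hp') (h p hp p' hp')

def binomialFractions (P : Set ℚ) : Subring ℤ[T;T⁻¹]⟦X⟧ where
  carrier := {z | ∃ M : Multiset (ℤ × ℕ), (∀ p ∈ M, 0 < p.2 ∧ candidatePole p ∈ P) ∧
    ∃ q : ℤ[T;T⁻¹][X], (binomialProd M : ℤ[T;T⁻¹]⟦X⟧) * z = q}
  mul_mem' := by
    rintro x y ⟨M₁, hM₁, q₁, hq₁⟩ ⟨M₂, hM₂, q₂, hq₂⟩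
    refine ⟨M₁ + M₂, fun p hp => (Multiset.mem_add.1 hp).elim (hM₁ p) (hM₂ p), q₁ * q₂, ?_⟩
    rw [binomialProd_add, coe_mul, coe_mul, ← hq₁, ← hq₂]
    ring
  one_mem' := ⟨0, by simp, 1, by simp [binomialProd]⟩
  add_mem' := by
    rintro x y ⟨M₁, hM₁, q₁, hq₁⟩ ⟨M₂, hM₂, q₂, hq₂⟩
    refine ⟨M₁ + M₂, fun p hp => (Multiset.mem_add.1 hp).elim (hM₁ p) (hM₂ p),
      binomialProd M₂ * q₁ + binomialProd M₁ * q₂, ?_⟩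
    rw [binomialProd_add, coe_add, coe_mul, coe_mul, coe_mul, ← hq₁, ← hq₂]
    ring
  zero_mem' := ⟨0, by simp, 0, by simp⟩
  neg_mem' := by
    rintro x ⟨M, hM, q, hq⟩
    exact ⟨M, hM, -q, by rw [coe_neg, ← hq, mul_neg]⟩

theorem coe_mem_binomialFractions (P : Set ℚ) (q : ℤ[T;T⁻¹][X]) :
    (q : ℤ[T;T⁻¹]⟦X⟧) ∈ binomialFractions P :=
  ⟨0, by simp, q, by simp [binomialProd]⟩

theorem coe_mem_candidatePoleRing (P : Set ℚ) (q : ℤ[T;T⁻¹][X]) :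
    (q : ℤ[T;T⁻¹]⟦X⟧) ∈ candidatePoleRing P := by
  induction q using Polynomial.induction_on with
  | C a =>
    rw [coe_C]
    exact Subring.subset_closure (Or.inl (Or.inl ⟨a, rfl⟩))
  | add p q hp hq => rw [coe_add]; exact add_mem hp hq
  | monomial n a h =>
    rw [pow_succ, ← mul_assoc, coe_mul, coe_X]
    exact mul_mem h (Subring.subset_closure (Or.inl (Or.inr rfl)))

theorem candidatePoleRing_le_binomialFractions (P : Set ℚ) :
    candidatePoleRing P ≤ binomialFractions P := by
  refine Subring.closure_le.2 ?_
  rintro z ((⟨r, rfl⟩ | rfl) | ⟨a, b, hb, hP, rfl⟩)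
  · simpa using coe_mem_binomialFractions P (C r)
  · simpa using coe_mem_binomialFractions P X
  · refine ⟨{(a, b)}, by simpa [candidatePole] using And.intro hb hP, 1, ?_⟩
    simpa [binomialProd, binomial] using coe_binomial_mul_invOfUnit (p := (a, b)) hb

theorem binomialFractions_le_candidatePoleRing (P : Set ℚ) :
    binomialFractions P ≤ candidatePoleRing P := by
  rintro z ⟨M, hM, q, hq⟩
  set inv := (M.map fun p => PowerSeries.invOfUnit (binomial p : ℤ[T;T⁻¹]⟦X⟧) 1).prod
  have hinv : (binomialProd M : ℤ[T;T⁻¹]⟦X⟧) * inv = 1 := by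
    rw [binomialProd, ← Polynomial.coeToPowerSeries.ringHom_apply, map_multiset_prod,
      Multiset.map_map, ← Multiset.prod_map_mul]
    exact Multiset.prod_eq_one fun x hx => by
      obtain ⟨p, hp, rfl⟩ := Multiset.mem_map.1 hx
      exact coe_binomial_mul_invOfUnit (hM p hp).1
  have hz : z = q * inv := by rw [← hq, mul_comm _ z, mul_assoc, hinv, mul_one]
  rw [hz]
  refine mul_mem (coe_mem_candidatePoleRing P q) (multiset_prod_mem _ fun x hx => ?_)
  obtain ⟨p, hp, rfl⟩ := Multiset.mem_map.1 hx
  exact Subring.subset_closure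
    (Or.inr ⟨p.1, p.2, (hM p hp).1, (hM p hp).2, by simp [binomial]⟩)

theorem candidatePoleRing_eq_binomialFractions (P : Set ℚ) :
    candidatePoleRing P = binomialFractions P :=
  le_antisymm (candidatePoleRing_le_binomialFractions P)
    (binomialFractions_le_candidatePoleRing P)

theorem mem_binomialFractions_inter {P₁ P₂ : Set ℚ} {z : ℤ[T;T⁻¹]⟦X⟧}
    (hz₁ : z ∈ binomialFractions P₁) (hz₂ : z ∈ binomialFractions P₂) :
    z ∈ binomialFractions (P₁ ∩ P₂) := by
  classical
  obtain ⟨M₁, hM₁, q₁, hq₁⟩ := hz₁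
  obtain ⟨M₂, hM₂, q₂, hq₂⟩ := hz₂
  set M := M₁.filter (candidatePole · ∈ P₂)
  set M' := M₁.filter (candidatePole · ∉ P₂)
  have hM₁_eq : binomialProd M₁ = binomialProd M' * binomialProd M := by
    rw [mul_comm, ← binomialProd_add, Multiset.filter_add_not]
  have hcross : binomialProd M₂ * q₁ = binomialProd M' * (binomialProd M * q₂) := by
    rw [← mul_assoc, ← hM₁_eq, ← coe_inj, coe_mul, coe_mul, ← hq₁, ← hq₂]
    ring
  have hM'_pos : ∀ p ∈ M', 0 < p.2 := fun p hp => (hM₁ p (Multiset.mem_of_mem_filter hp)).1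
  have hcop := isCoprime_map_binomialProd hM'_pos (fun p hp => (hM₂ p hp).1)
    fun p hp p' hp' he => (Multiset.mem_filter.1 hp).2 (he ▸ (hM₂ p' hp').2)
  obtain ⟨r, rfl⟩ : binomialProd M' ∣ q₁ := by
    refine dvd_of_map_dvd_map_of_isUnit_leadingCoeff _ (IsFractionRing.injective _ _)
      (isUnit_leadingCoeff_binomialProd hM'_pos) (hcop.dvd_of_dvd_mul_left ?_)
    rw [← Polynomial.map_mul, hcross, Polynomial.map_mul]
    exact dvd_mul_right _ _
  refine ⟨M, fun p hp => ?_, r, ?_⟩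
  · obtain ⟨hp₁, hp₂⟩ := Multiset.mem_filter.1 hp
    exact ⟨(hM₁ p hp₁).1, (hM₁ p hp₁).2, hp₂⟩
  · have hne : (binomialProd M' : ℤ[T;T⁻¹]⟦X⟧) ≠ 0 := coe_eq_zero_iff.not.2 <|
      leadingCoeff_ne_zero.1 (isUnit_leadingCoeff_binomialProd hM'_pos).ne_zero
    apply mul_left_cancel₀ hne
    rw [← mul_assoc, ← coe_mul, ← hM₁_eq, hq₁, coe_mul]

theorem mem_candidatePoleRing_inter_general
    (P₁ P₂ : Set ℚ)
    (z : PowerSeries (LaurentPolynomial ℤ))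
    (hz₁ : z ∈ candidatePoleRing P₁) (hz₂ : z ∈ candidatePoleRing P₂) :
    z ∈ candidatePoleRing (P₁ ∩ P₂) := by
  rw [candidatePoleRing_eq_binomialFractions] at hz₁ hz₂ ⊢
  exact mem_binomialFractions_inter hz₁ hz₂

/-- The intersection of two sets of candidate poles is a set of candidate
poles: membership in both `D_{𝒫₁}` and `D_{𝒫₂}` implies membership in
`D_{𝒫₁ ∩ 𝒫₂}`. -/
theorem mem_candidatePoleRing_inter
    (P₁ P₂ : Set ℚ) (h₁ : P₁.Finite) (h₂ : P₂.Finite)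
    (hm₁ : (-1 : ℚ) ∈ P₁) (hm₂ : (-1 : ℚ) ∈ P₂)
    (z : PowerSeries (LaurentPolynomial ℤ))
    (hz₁ : z ∈ candidatePoleRing P₁) (hz₂ : z ∈ candidatePoleRing P₂) :
    z ∈ candidatePoleRing (P₁ ∩ P₂) :=
  mem_candidatePoleRing_inter_general P₁ P₂ z hz₁ hz₂

end
end
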